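/- arXiv:2109.01883 — 5 statements merged into one kernel-verified Lean document; each statement's English description precedes it below -/
import Mathlib

section
/- (Characterization of fragility-feasible sequences.) A sequence S = (b_1, …, b_s) with s ≤ mk admits a feasible loading into m stacks of height k if and only if for every index i with b_i of type L, either (c1) a^H(i) + F(a^L(i)) ≥ k, or (c2) a^H(s) - a^H(i) ≤ mk - (l(i) - l(i) mod k + k), where l(i) = a^H(i) + a^L(i). -/
/-- Item types: `L` = fragile (light), `H` = non-fragile (heavy). -/
inductive Item : Type
  | L : Item
  | H : Item
  deriving DecidableEq, BEq

/-- A sequence of items `b` admits a feasible loading into `m` identical stacks of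
height at most `k`: there is an assignment of each item to a stack such that each stack
receives at most `k` items and, since items are placed in sequence order (each new item
on top of its stack), within each stack no `H` item comes after an `L` item. -/
def FeasibleLoading (m k : ℕ) (b : List Item) : Prop :=
  ∃ f : Fin b.length → Fin m,
    (∀ s : Fin m, (Finset.univ.filter (fun i => f i = s)).card ≤ k) ∧
    (∀ i j : Fin b.length, i < j → f i = f j → b.get i = Item.L → b.get j = Item.L)

/-- Modified modulo: `Fmod k x = x % k` if `x % k ≠ 0`, else `k`. -/
def Fmod (k x : ℕ) : ℕ := if x % k ≠ 0 then x % k else k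


instance : LawfulBEq Item where
  eq_of_beq {a b} h := by cases a <;> cases b <;> simp_all <;> exact absurd h (by decide)
  rfl {a} := by cases a <;> decide

lemma Item.not_L_eq_H (x : Item) (h : x ≠ Item.L) : x = Item.H := by cases x <;> simp_all

lemma count_HL (t : List Item) : t.count Item.H + t.count Item.L = t.length := by
  induction t with
  | nil => simp
  | cons x s ih => cases x <;> simp [List.count_cons, ← ih] <;> omega

lemma count_take_card (b : List Item) (a : Item) (l : ℕ) :
    (b.take l).count a =
      (Finset.univ.filter (fun j : Fin b.length => (j : ℕ) < l ∧ b.get j = a)).card := by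
  induction l with
  | zero => simp
  | succ l ih =>
    by_cases hl : l < b.length
    · rw [List.take_succ]
      have hg : b[l]? = some (b.get ⟨l, hl⟩) := by
        rw [List.getElem?_eq_getElem hl]; rfl
      rw [hg]
      simp only [Option.toList_some, List.count_append, List.count_singleton, ih]
      have hsplit : (Finset.univ.filter (fun j : Fin b.length => (j : ℕ) < l + 1 ∧ b.get j = a))
          = (Finset.univ.filter (fun j : Fin b.length => (j : ℕ) < l ∧ b.get j = a)) ∪
            (Finset.univ.filter (fun j : Fin b.length => (j : ℕ) = l ∧ b.get j = a)) := by
        ext j; simp only [Finset.mem_filter, Finset.mem_union, Finset.mem_univ, true_and]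
        constructor
        · rintro ⟨h1, h2⟩
          rcases Nat.lt_succ_iff_lt_or_eq.mp h1 with h | h
          · exact Or.inl ⟨h, h2⟩
          · exact Or.inr ⟨h, h2⟩
        · rintro (⟨h1, h2⟩ | ⟨h1, h2⟩) <;> exact ⟨by omega, h2⟩
      have hdisj : Disjoint
          (Finset.univ.filter (fun j : Fin b.length => (j : ℕ) < l ∧ b.get j = a))
          (Finset.univ.filter (fun j : Fin b.length => (j : ℕ) = l ∧ b.get j = a)) := by
        rw [Finset.disjoint_left]
        intro j hj1 hj2
        simp only [Finset.mem_filter] at hj1 hj2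
        omega
      rw [hsplit, Finset.card_union_of_disjoint hdisj]
      congr 1
      by_cases ha : b.get ⟨l, hl⟩ = a
      · have he : (Finset.univ.filter (fun j : Fin b.length => (j : ℕ) = l ∧ b.get j = a))
            = {⟨l, hl⟩} := by
          ext j
          simp only [Finset.mem_filter, Finset.mem_univ, true_and, Finset.mem_singleton]
          constructor
          · rintro ⟨h1, _⟩; exact Fin.ext h1
          · rintro rfl; exact ⟨rfl, ha⟩
        rw [he]; simpa using ha
      · have he : (Finset.univ.filter (fun j : Fin b.length => (j : ℕ) = l ∧ b.get j = a))
            = ∅ := by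
          ext j
          simp only [Finset.mem_filter, Finset.mem_univ, true_and, Finset.notMem_empty,
            iff_false, not_and]
          intro h1
          have : j = ⟨l, hl⟩ := Fin.ext h1
          rw [this]; exact ha
        rw [he]; simpa using ha
    · have h1 : b.take (l+1) = b.take l := by
        rw [List.take_of_length_le (by omega), List.take_of_length_le (by omega)]
      have h2 : (Finset.univ.filter (fun j : Fin b.length => (j : ℕ) < l + 1 ∧ b.get j = a))
          = (Finset.univ.filter (fun j : Fin b.length => (j : ℕ) < l ∧ b.get j = a)) := by
        ext j
        have := j.2
        simp only [Finset.mem_filter, Finset.mem_univ, true_and]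
        constructor <;> intro h <;> exact ⟨by omega, h.2⟩
      rw [h1, h2, ih]

lemma count_card (b : List Item) (a : Item) :
    b.count a = (Finset.univ.filter (fun j : Fin b.length => b.get j = a)).card := by
  have := count_take_card b a b.length
  rw [List.take_length] at this
  rw [this]
  congr 1
  ext j
  have := j.2
  simp only [Finset.mem_filter, Finset.mem_univ, true_and]
  constructor
  · exact fun h => h.2
  · exact fun h => ⟨by omega, h⟩

lemma count_take_mono (b : List Item) (a : Item) {l l' : ℕ} (h : l ≤ l') :
    (b.take l).count a ≤ (b.take l').count a := by
  have he : b.take l = (b.take l').take l := by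
    rw [List.take_take, min_eq_left h]
  rw [he]
  exact (List.take_prefix l (b.take l')).count_le a

lemma count_take_succ (b : List Item) (j : ℕ) (hj : j < b.length) (a : Item) :
    (b.take (j+1)).count a = (b.take j).count a + (if b.get ⟨j, hj⟩ = a then 1 else 0) := by
  rw [List.take_succ]
  have hg : b[j]? = some (b.get ⟨j, hj⟩) := by rw [List.getElem?_eq_getElem hj]; rfl
  rw [hg]
  simp only [Option.toList_some, List.count_append, List.count_singleton]
  congr 1
  by_cases h : b.get ⟨j, hj⟩ = a
  · simp [h]
  · simp only [beq_iff_eq]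

lemma exists_item (b : List Item) (a : Item) : ∀ (c : ℕ), 1 ≤ c → c ≤ b.count a →
    ∃ (jn : ℕ) (hj : jn < b.length), b.get ⟨jn, hj⟩ = a ∧ (b.take (jn+1)).count a = c := by
  induction b with
  | nil => intro c h1 h2; simp at h2; omega
  | cons x t ih =>
    intro c h1 h2
    by_cases hx : x = a
    · rcases Nat.eq_or_lt_of_le h1 with h | h
      · exact ⟨0, by simp, by simpa using hx, by simp [hx, ← h]⟩
      · have h2' : c - 1 ≤ t.count a := by
          rw [List.count_cons] at h2; simp [hx] at h2; omega
        obtain ⟨jn, hj, hget, hcnt⟩ := ih (c-1) (by omega) h2'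
        refine ⟨jn + 1, by simpa using hj, by simpa using hget, ?_⟩
        rw [List.take_succ_cons, List.count_cons, hcnt]
        simp [hx]; omega
    · have h2' : c ≤ t.count a := by
        rw [List.count_cons] at h2; simp [hx] at h2; omega
      obtain ⟨jn, hj, hget, hcnt⟩ := ih c h1 h2'
      refine ⟨jn + 1, by simpa using hj, by simpa using hget, ?_⟩
      rw [List.take_succ_cons, List.count_cons, hcnt]
      simp [hx]

lemma count_take_le (b : List Item) (a : Item) (l : ℕ) :
    (b.take l).count a ≤ b.count a := (List.take_prefix l b).count_le a


/-- `Lnum b j` : number of L's among the first `j+1` items. -/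
def Lnum (b : List Item) (j : ℕ) : ℕ := (b.take (j+1)).count Item.L
/-- `Hnum b j` : number of H's among the first `j+1` items. -/
def Hnum (b : List Item) (j : ℕ) : ℕ := (b.take (j+1)).count Item.H

lemma num_pos (b : List Item) (a : Item) (j : ℕ) (hj : j < b.length)
    (h : b.get ⟨j, hj⟩ = a) : 1 ≤ (b.take (j+1)).count a := by
  rw [count_take_succ b j hj a, if_pos h]; omega

lemma num_strict (b : List Item) (a : Item) {i j : ℕ} (hij : i < j) (hj : j < b.length)
    (h : b.get ⟨j, hj⟩ = a) :
    (b.take (i+1)).count a < (b.take (j+1)).count a := by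
  have h1 : (b.take (i+1)).count a ≤ (b.take j).count a := count_take_mono b a (by omega)
  rw [count_take_succ b j hj a, if_pos h]
  omega

lemma num_inj (b : List Item) (a : Item) (i j : Fin b.length)
    (hi : b.get i = a) (hj : b.get j = a)
    (heq : (b.take ((i:ℕ)+1)).count a = (b.take ((j:ℕ)+1)).count a) : i = j := by
  rcases lt_trichotomy i j with h | h | h
  · exact absurd heq (Nat.ne_of_lt (num_strict b a (Fin.lt_def.mp h) j.2 (by simpa using hj)))
  · exact h
  · exact absurd heq.symm (Nat.ne_of_lt (num_strict b a (Fin.lt_def.mp h) i.2 (by simpa using hi)))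

/-- generic cardinality bound via an injective numbering into an interval -/
lemma card_le_of_inj_num {N : ℕ} (P : Fin N → Prop) [DecidablePred P]
    (num : Fin N → ℕ) (lo c : ℕ)
    (hmem : ∀ j, P j → num j ∈ Finset.Ico lo (lo + c))
    (hinj : ∀ i j, P i → P j → num i = num j → i = j) :
    (Finset.univ.filter P).card ≤ c := by
  calc (Finset.univ.filter P).card ≤ (Finset.Ico lo (lo + c)).card := by
        apply Finset.card_le_card_of_injOn num
        · intro j hj
          exact hmem j (Finset.mem_filter.mp hj).2
        · intro i hi j hj hij
          simp only [Finset.coe_filter, Set.mem_setOf_eq] at hi hj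
          exact hinj i j hi.2 hj.2 hij
  _ = c := by rw [Nat.card_Ico]; omega

/-! division helpers -/

lemma div_pred_bounds {k x t : ℕ} (hk : 0 < k) (hx : 1 ≤ x) (hdiv : (x - 1)/k = t) :
    k*t + 1 ≤ x ∧ x ≤ k*t + k := by
  have e := Nat.div_add_mod (x-1) k
  have hr := Nat.mod_lt (x-1) hk
  rw [hdiv] at e
  omega

lemma div_bounds {k x t : ℕ} (hk : 0 < k) (hdiv : x/k = t) : k*t ≤ x ∧ x < k*t + k := by
  have e := Nat.div_add_mod x k
  have hr := Nat.mod_lt x hk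
  rw [hdiv] at e
  omega

lemma div_eq' {k x t : ℕ} (hk : 0 < k) (h1 : k*t ≤ x) (h2 : x < k*t + k) : x/k = t := by
  have a1 : t*k = k*t := mul_comm _ _
  have a2 : (t+1)*k = k*t + k := by ring
  exact Nat.div_eq_of_lt_le (by omega) (by omega)

lemma div_lt' {k x c : ℕ} (hk : 0 < k) (h : x < k*c) : x/k < c := by
  have a1 : c*k = k*c := mul_comm _ _
  rw [Nat.div_lt_iff_lt_mul hk]
  omega

/-! the canonical loading -/

def nLc (b : List Item) : ℕ := b.count Item.L
def nHc (b : List Item) : ℕ := b.count Item.H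
def pc (k : ℕ) (b : List Item) : ℕ := nLc b % k
def QLc (k : ℕ) (b : List Item) : ℕ := (nLc b - 1)/k
def Qc (k : ℕ) (b : List Item) : ℕ := if nLc b = 0 then 0 else QLc k b + 1
def HBc (k : ℕ) (b : List Item) : ℕ :=
  (Finset.univ.filter (fun j : Fin b.length =>
    b.get j = Item.H ∧ Lnum b j ≤ nLc b - pc k b)).card
def h0c (k : ℕ) (b : List Item) : ℕ :=
  if pc k b = 0 then 0 else min (k - pc k b) (HBc k b)
def chosenc (k : ℕ) (b : List Item) (j : Fin b.length) : Prop :=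
  pc k b ≠ 0 ∧ Hnum b (j:ℕ) ≤ k - pc k b ∧ Lnum b (j:ℕ) ≤ nLc b - pc k b

instance (k : ℕ) (b : List Item) : DecidablePred (chosenc k b) := by
  intro j; unfold chosenc; infer_instance

def gc (k : ℕ) (b : List Item) (j : Fin b.length) : ℕ :=
  if b.get j = Item.L then (Lnum b (j:ℕ) - 1)/k
  else if chosenc k b j then QLc k b
  else Qc k b + (Hnum b (j:ℕ) - h0c k b - 1)/k

/-! basic facts -/

lemma Lnum_le (b : List Item) (j : ℕ) : Lnum b j ≤ nLc b := count_take_le b Item.L (j+1)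
lemma Hnum_le (b : List Item) (j : ℕ) : Hnum b j ≤ nHc b := count_take_le b Item.H (j+1)
lemma Lnum_mono (b : List Item) {i j : ℕ} (h : i ≤ j) : Lnum b i ≤ Lnum b j :=
  count_take_mono b Item.L (by omega)

lemma pc_lt (k : ℕ) (hk : 0 < k) (b : List Item) : pc k b < k := Nat.mod_lt _ hk

lemma pc_n (k : ℕ) (b : List Item) :
    k * (nLc b / k) + pc k b = nLc b := Nat.div_add_mod _ _

lemma QLc_eq (k : ℕ) (hk : 0 < k) (b : List Item) (hp : pc k b ≠ 0) :
    QLc k b = nLc b / k := by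
  have e := pc_n k b
  have hpk := pc_lt k hk b
  exact div_eq' hk (by omega) (by omega)

lemma kq_pred (k q : ℕ) (hq : q ≠ 0) : k * (q - 1) + k = k * q := by
  cases' q with q'
  · exact absurd rfl hq
  · simp [Nat.mul_succ]

lemma QLc_eq' (k : ℕ) (hk : 0 < k) (b : List Item) (hp : pc k b = 0) (hn : nLc b ≠ 0) :
    QLc k b = nLc b / k - 1 := by
  have e := pc_n k b
  obtain ⟨q, hq⟩ : ∃ q, nLc b / k = q := ⟨_, rfl⟩
  rw [hq] at e ⊢
  rw [hp] at e
  have hq1 : q ≠ 0 := by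
    intro h0
    rw [h0, Nat.mul_zero] at e
    omega
  have a3 := kq_pred k q hq1
  obtain ⟨A, hA⟩ : ∃ A, k * (q - 1) = A := ⟨_, rfl⟩
  obtain ⟨B, hB⟩ : ∃ B, k * q = B := ⟨_, rfl⟩
  rw [hA, hB] at a3
  rw [hB] at e
  apply div_eq' hk <;> rw [hA] <;> omega

lemma Qc_mul (k : ℕ) (hk : 0 < k) (b : List Item) (hp : pc k b ≠ 0) :
    Qc k b * k = nLc b - pc k b + k := by
  have e := pc_n k b
  have hpk := pc_lt k hk b
  have hn : nLc b ≠ 0 := by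
    intro h0
    exact hp (by rw [pc, h0, Nat.zero_mod])
  rw [Qc, if_neg hn, QLc_eq k hk b hp]
  obtain ⟨q, hq⟩ : ∃ q, nLc b / k = q := ⟨_, rfl⟩
  rw [hq] at e ⊢
  have a1 : (q + 1) * k = k * q + k := by ring
  obtain ⟨B, hB⟩ : ∃ B, k * q = B := ⟨_, rfl⟩
  rw [hB] at e a1
  omega

lemma Qc_mul0 (k : ℕ) (hk : 0 < k) (b : List Item) (hp : pc k b = 0) (hn : nLc b ≠ 0) :
    Qc k b * k = nLc b := by
  have e := pc_n k b
  rw [Qc, if_neg hn, QLc_eq' k hk b hp hn]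
  obtain ⟨q, hq⟩ : ∃ q, nLc b / k = q := ⟨_, rfl⟩
  rw [hq] at e ⊢
  rw [hp] at e
  have hq1 : q ≠ 0 := by
    intro h0; rw [h0, Nat.mul_zero] at e; omega
  have a1 : (q - 1 + 1) * k = q * k := by
    congr 1; omega
  have a2 : q * k = k * q := mul_comm _ _
  obtain ⟨B, hB⟩ : ∃ B, k * q = B := ⟨_, rfl⟩
  rw [hB] at e a2
  omega

/-! non-chosen H items have Hnum > h0c -/

lemma hnc_gt (k : ℕ) (hk : 0 < k) (b : List Item) (j : Fin b.length)
    (hj : b.get j = Item.H) (hnc : ¬ chosenc k b j) : h0c k b < Hnum b (j:ℕ) := by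
  have hpos : 1 ≤ Hnum b (j:ℕ) := num_pos b Item.H (j:ℕ) j.2 (by simpa using hj)
  by_cases hp : pc k b = 0
  · rw [h0c, if_pos hp]; omega
  · rw [h0c, if_neg hp]
    by_cases hA : Hnum b (j:ℕ) ≤ k - pc k b
    · by_cases hB : Lnum b (j:ℕ) ≤ nLc b - pc k b
      · exact absurd ⟨hp, hA, hB⟩ hnc
      · -- HB < Hnum j
        have hsub : HBc k b ≤ (b.take (j:ℕ)).count Item.H := by
          rw [count_take_card b Item.H (j:ℕ), HBc]
          apply Finset.card_le_card
          intro j' hj'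
          rw [Finset.mem_filter] at hj' ⊢
          refine ⟨hj'.1, ?_, hj'.2.1⟩
          by_contra hge
          push_neg at hge
          exact hB (le_trans (Lnum_mono b (by omega)) hj'.2.2)
        have hstep : (b.take (j:ℕ)).count Item.H < Hnum b (j:ℕ) := by
          rw [Hnum, count_take_succ b (j:ℕ) j.2 Item.H, if_pos (by simpa using hj)]
          omega
        have : min (k - pc k b) (HBc k b) ≤ HBc k b := min_le_right _ _
        omega
    · have : min (k - pc k b) (HBc k b) ≤ k - pc k b := min_le_left _ _
      omega

/-! per-stack cardinality bound -/

lemma gc_card (k : ℕ) (hk : 0 < k) (b : List Item) (t : ℕ) :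
    (Finset.univ.filter (fun j : Fin b.length => gc k b j = t)).card ≤ k := by
  classical
  set S := Finset.univ.filter (fun j : Fin b.length => gc k b j = t) with hS
  have hsplit : (S.filter (fun j => b.get j = Item.L)).card
      + (S.filter (fun j => ¬ b.get j = Item.L)).card = S.card :=
    Finset.card_filter_add_card_filter_not (p := fun j => b.get j = Item.L)
  have hPL : S.filter (fun j => b.get j = Item.L)
      = Finset.univ.filter (fun j : Fin b.length => gc k b j = t ∧ b.get j = Item.L) := by
    rw [hS, Finset.filter_filter]
  have hPH : S.filter (fun j => ¬ b.get j = Item.L)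
      = Finset.univ.filter (fun j : Fin b.length => gc k b j = t ∧ ¬ b.get j = Item.L) := by
    rw [hS, Finset.filter_filter]
  rw [hPL, hPH] at hsplit
  set PL := Finset.univ.filter (fun j : Fin b.length => gc k b j = t ∧ b.get j = Item.L) with hPL'
  set PH := Finset.univ.filter (fun j : Fin b.length => gc k b j = t ∧ ¬ b.get j = Item.L) with hPH'
  rw [← hsplit]
  have hgetL : ∀ j : Fin b.length, j ∈ PL → (Lnum b (j:ℕ) - 1)/k = t := by
    intro j hj
    rw [hPL', Finset.mem_filter] at hj
    have := hj.2.1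
    rwa [gc, if_pos hj.2.2] at this
  -- bound on PL for arbitrary t
  have hPLk : PL.card ≤ k := by
    rw [hPL']
    apply card_le_of_inj_num _ (fun j => Lnum b (j:ℕ)) (k*t + 1) k
    · intro j hj
      have h1 : (Lnum b (j:ℕ) - 1)/k = t := by
        rw [gc, if_pos hj.2] at hj
        exact hj.1
      have hx : 1 ≤ Lnum b (j:ℕ) := num_pos b Item.L (j:ℕ) j.2 (by simpa using hj.2)
      have := div_pred_bounds hk hx h1
      rw [Finset.mem_Ico]
      omega
    · intro i j hi hj heq
      exact num_inj b Item.L i j hi.2 hj.2 heq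
  by_cases htQ : Qc k b ≤ t
  · -- PL empty
    have hPL0 : PL.card = 0 := by
      rw [Finset.card_eq_zero, hPL', Finset.filter_eq_empty_iff]
      intro j _
      rintro ⟨hgt, hL⟩
      have hn0 : nLc b ≠ 0 := by
        have h1 : 1 ≤ Lnum b (j:ℕ) := num_pos b Item.L (j:ℕ) j.2 (by simpa using hL)
        have h2 := Lnum_le b (j:ℕ)
        omega
      rw [gc, if_pos hL] at hgt
      have h1 : (Lnum b (j:ℕ) - 1)/k ≤ QLc k b :=
        Nat.div_le_div_right (by have := Lnum_le b (j:ℕ); omega)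
      rw [Qc, if_neg hn0] at htQ
      omega
    -- PH: all non-chosen
    have hPHk : PH.card ≤ k := by
      rw [hPH']
      apply card_le_of_inj_num _ (fun j => Hnum b (j:ℕ)) (h0c k b + 1 + k*(t - Qc k b)) k
      · intro j hj
        obtain ⟨hgt, hnl⟩ := hj
        have hH : b.get j = Item.H := Item.not_L_eq_H _ hnl
        have hnc : ¬ chosenc k b j := by
          intro hch
          rw [gc, if_neg (by rw [hH]; intro hc; exact Item.noConfusion hc), if_pos hch] at hgt
          have hn0 : nLc b ≠ 0 := by
            intro h0
            exact hch.1 (by rw [pc, h0, Nat.zero_mod])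
          rw [Qc, if_neg hn0] at htQ
          omega
        rw [gc, if_neg (by rw [hH]; intro hc; exact Item.noConfusion hc), if_neg hnc] at hgt
        have hdiv : (Hnum b (j:ℕ) - h0c k b - 1)/k = t - Qc k b := by omega
        have := div_bounds hk hdiv
        have := hnc_gt k hk b j hH hnc
        rw [Finset.mem_Ico]
        omega
      · intro i j hi hj heq
        exact num_inj b Item.H i j (Item.not_L_eq_H _ hi.2) (Item.not_L_eq_H _ hj.2) heq
    omega
  · push_neg at htQ
    -- t < Qc, so nLc ≠ 0
    have hn0 : nLc b ≠ 0 := by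
      intro h0
      rw [Qc, if_pos h0] at htQ
      omega
    have hQval : Qc k b = QLc k b + 1 := by rw [Qc, if_neg hn0]
    -- PH elements are chosen with t = QLc
    by_cases htQL : t = QLc k b ∧ pc k b ≠ 0
    · -- mixed stack
      obtain ⟨htv, hpne⟩ := htQL
      have e := pc_n k b
      have hpk := pc_lt k hk b
      have hQLq := QLc_eq k hk b hpne
      -- PL ≤ pc
      have hPLp : PL.card ≤ pc k b := by
        rw [hPL']
        apply card_le_of_inj_num _ (fun j => Lnum b (j:ℕ)) (k*(nLc b / k) + 1) (pc k b)
        · intro j hj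
          obtain ⟨hgt, hL⟩ := hj
          rw [gc, if_pos hL] at hgt
          have hx : 1 ≤ Lnum b (j:ℕ) := num_pos b Item.L (j:ℕ) j.2 (by simpa using hL)
          have hb := div_pred_bounds hk hx (by rw [hgt, htv, hQLq])
          have := Lnum_le b (j:ℕ)
          rw [Finset.mem_Ico]
          omega
        · intro i j hi hj heq
          exact num_inj b Item.L i j hi.2 hj.2 heq
      -- PH ≤ k - pc
      have hPHp : PH.card ≤ k - pc k b := by
        rw [hPH']
        apply card_le_of_inj_num _ (fun j => Hnum b (j:ℕ)) 1 (k - pc k b)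
        · intro j hj
          obtain ⟨hgt, hnl⟩ := hj
          have hH : b.get j = Item.H := Item.not_L_eq_H _ hnl
          have hch : chosenc k b j := by
            by_contra hnc
            rw [gc, if_neg (by rw [hH]; intro hc; exact Item.noConfusion hc), if_neg hnc] at hgt
            have hle : Qc k b ≤ t := hgt ▸ Nat.le_add_right _ _
            omega
          have hpos : 1 ≤ Hnum b (j:ℕ) := num_pos b Item.H (j:ℕ) j.2 (by simpa using hH)
          rw [Finset.mem_Ico]
          exact ⟨hpos, by have := hch.2.1; omega⟩
        · intro i j hi hj heq
          exact num_inj b Item.H i j (Item.not_L_eq_H _ hi.2) (Item.not_L_eq_H _ hj.2) heq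
      omega
    · -- pure L stack (or nothing)
      have hPH0 : PH.card = 0 := by
        rw [Finset.card_eq_zero, hPH', Finset.filter_eq_empty_iff]
        intro j _
        rintro ⟨hgt, hnl⟩
        have hH : b.get j = Item.H := Item.not_L_eq_H _ hnl
        by_cases hch : chosenc k b j
        · rw [gc, if_neg (by rw [hH]; intro hc; exact Item.noConfusion hc), if_pos hch] at hgt
          exact htQL ⟨hgt.symm, hch.1⟩
        · rw [gc, if_neg (by rw [hH]; intro hc; exact Item.noConfusion hc), if_neg hch] at hgt
          have : Qc k b ≤ t := hgt ▸ Nat.le_add_right _ _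
          omega
      omega

/-! order condition -/

lemma gc_ord (k : ℕ) (hk : 0 < k) (b : List Item) (i j : Fin b.length)
    (hij : i < j) (heq : gc k b i = gc k b j) (hiL : b.get i = Item.L) :
    b.get j = Item.L := by
  by_contra hnl
  have hH : b.get j = Item.H := Item.not_L_eq_H _ hnl
  have hn0 : nLc b ≠ 0 := by
    have h1 : 1 ≤ Lnum b (i:ℕ) := num_pos b Item.L (i:ℕ) i.2 (by simpa using hiL)
    have h2 := Lnum_le b (i:ℕ)
    omega
  have hgi : gc k b i = (Lnum b (i:ℕ) - 1)/k := by rw [gc, if_pos hiL]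
  have hQval : Qc k b = QLc k b + 1 := by rw [Qc, if_neg hn0]
  have hile : (Lnum b (i:ℕ) - 1)/k ≤ QLc k b :=
    Nat.div_le_div_right (by have := Lnum_le b (i:ℕ); omega)
  by_cases hch : chosenc k b j
  · have hgj : gc k b j = QLc k b := by
      rw [gc, if_neg (by rw [hH]; intro hc; exact Item.noConfusion hc), if_pos hch]
    obtain ⟨hpne, -, hLle⟩ := hch
    have hQLq := QLc_eq k hk b hpne
    have e := pc_n k b
    have hmono : Lnum b (i:ℕ) ≤ Lnum b (j:ℕ) := Lnum_mono b (by exact le_of_lt (Fin.lt_def.mp hij))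
    have hpos : 1 ≤ Lnum b (i:ℕ) := num_pos b Item.L (i:ℕ) i.2 (by simpa using hiL)
    have hlt : Lnum b (i:ℕ) - 1 < k * (nLc b / k) := by omega
    have := div_lt' hk hlt
    rw [hgi, hgj, hQLq] at heq
    exact (Nat.ne_of_lt this) heq
  · have hgj : Qc k b ≤ gc k b j := by
      rw [gc, if_neg (by rw [hH]; intro hc; exact Item.noConfusion hc), if_neg hch]
      exact Nat.le_add_right _ _
    have h5 : gc k b i ≤ QLc k b := by rw [hgi]; exact hile
    rw [heq] at h5
    omega

lemma cap (m k : ℕ) (hm : 0 < m) (hk : 0 < k) (b : List Item) (hs : b.length ≤ m * k)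
    (hcond : ∀ i : Fin b.length, b.get i = Item.L →
        (k ≤ (b.take (i + 1)).count Item.H + Fmod k ((b.take (i + 1)).count Item.L)) ∨
        ((b.count Item.H : ℤ) - ((b.take (i + 1)).count Item.H : ℤ) ≤
          (m * k : ℤ) - (((i : ℤ) + 1) - ((((i : ℕ) + 1) % k : ℕ) : ℤ) + (k : ℤ)))) :
    nHc b + Qc k b * k ≤ m * k + h0c k b := by
  have hlen : nHc b + nLc b = b.length := count_HL b
  by_cases hn : nLc b = 0
  · rw [Qc, if_pos hn, Nat.zero_mul]
    omega
  · by_cases hp : pc k b = 0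
    · rw [Qc_mul0 k hk b hp hn]
      omega
    · rw [Qc_mul k hk b hp]
      have hpk : pc k b < k := Nat.mod_lt _ hk
      have hple : pc k b ≤ nLc b := Nat.mod_le _ _
      by_cases hHB : k - pc k b ≤ HBc k b
      · have h0eq : h0c k b = k - pc k b := by rw [h0c, if_neg hp]; exact min_eq_left hHB
        rw [h0eq]
        obtain ⟨A, hA⟩ : ∃ x, nHc b = x := ⟨_, rfl⟩
        obtain ⟨Bn, hBn⟩ : ∃ x, nLc b = x := ⟨_, rfl⟩
        obtain ⟨P, hP⟩ : ∃ x, pc k b = x := ⟨_, rfl⟩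
        rw [hA, hBn, hP]
        rw [hA, hBn] at hlen
        rw [hP] at hpk
        rw [hP, hBn] at hple
        omega
      · push_neg at hHB
        have h0eq : h0c k b = HBc k b := by rw [h0c, if_neg hp]; exact min_eq_right (le_of_lt hHB)
        rw [h0eq]
        obtain ⟨jn, hj, hget, hcnt⟩ :=
          exists_item b Item.L (nLc b - pc k b + 1) (by omega)
            (show nLc b - pc k b + 1 ≤ nLc b by omega)
        set i0 : Fin b.length := ⟨jn, hj⟩ with hi0
        have hget' : b.get i0 = Item.L := hget
        have hcnt' : (b.take ((i0:ℕ)+1)).count Item.L = nLc b - pc k b + 1 := hcnt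
        have hval : (i0 : ℕ) = jn := rfl
        have hstep : (b.take (jn+1)).count Item.L = (b.take jn).count Item.L + 1 := by
          rw [count_take_succ b jn hj Item.L, if_pos hget]
        have hHBeq : HBc k b = (b.take (jn+1)).count Item.H := by
          have h1 : (b.take (jn+1)).count Item.H = (b.take jn).count Item.H := by
            rw [count_take_succ b jn hj Item.H,
              if_neg (by rw [hget]; intro hc; exact Item.noConfusion hc)]
            omega
          rw [h1, count_take_card b Item.H jn, HBc]
          congr 1
          ext j'
          simp only [Finset.mem_filter, Finset.mem_univ, true_and]
          constructor
          · rintro ⟨hH', hle'⟩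
            refine ⟨?_, hH'⟩
            by_contra hge
            push_neg at hge
            have hmn : (b.take (jn+1)).count Item.L ≤ Lnum b (j':ℕ) :=
              count_take_mono b Item.L (by omega)
            rw [hcnt] at hmn
            have : Lnum b (j':ℕ) ≤ nLc b - pc k b := hle'
            omega
          · rintro ⟨hlt', hH'⟩
            refine ⟨hH', ?_⟩
            have h2 : Lnum b (j':ℕ) ≤ (b.take jn).count Item.L :=
              count_take_mono b Item.L (by omega)
            show Lnum b (j':ℕ) ≤ nLc b - pc k b
            omega
        have e := pc_n k b
        obtain ⟨q, hq⟩ : ∃ q, nLc b / k = q := ⟨_, rfl⟩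
        rw [hq] at e
        obtain ⟨B, hB⟩ : ∃ B, k * q = B := ⟨_, rfl⟩
        rw [hB] at e
        have hqk : q * k = B := by rw [← hB]; exact mul_comm _ _
        rcases hcond i0 hget' with hc1 | hc2
        · exfalso
          have hk1 : k ≠ 1 := by
            intro h1
            exact hp (by rw [pc, h1]; exact Nat.mod_one _)
          have hm1 : (nLc b - pc k b + 1) % k = 1 := by
            have h3 : nLc b - pc k b + 1 = 1 + q * k := by omega
            rw [h3, Nat.add_mul_mod_self_right]
            exact Nat.mod_eq_of_lt (by omega)
          rw [hcnt', Fmod, hm1] at hc1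
          simp only [ne_eq, one_ne_zero, not_false_eq_true, if_pos] at hc1
          rw [← hHBeq] at hc1
          omega
        · -- use c2
          have hlen1 : (b.take (jn+1)).length = jn + 1 := by
            rw [List.length_take]; omega
          have hsum1 : (b.take (jn+1)).count Item.H + (b.take (jn+1)).count Item.L = jn+1 := by
            rw [count_HL, hlen1]
          have hjn : jn + 1 = (HBc k b + 1) + q * k := by omega
          have hmodjn : ((i0:ℕ) + 1) % k = HBc k b + 1 := by
            rw [hval, hjn, Nat.add_mul_mod_self_right]
            exact Nat.mod_eq_of_lt (by omega)
          rw [hmodjn] at hc2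
          have hcH : ((b.take ((i0:ℕ) + 1)).count Item.H : ℤ) = (HBc k b : ℤ) := by
            rw [hval, ← hHBeq]
          rw [hcH] at hc2
          have hjnz : (((i0:ℕ) : ℕ) : ℤ) + 1 = (HBc k b : ℤ) + 1 + (B : ℤ) := by
            rw [hval]
            have h9 : ((jn + 1 : ℕ) : ℤ) = (((HBc k b + 1) + q * k : ℕ) : ℤ) := by
              exact_mod_cast congrArg (fun x : ℕ => (x : ℤ)) hjn
            push_cast at h9 ⊢
            have hqk' : ((q * k : ℕ) : ℤ) = (B : ℤ) := by exact_mod_cast congrArg (fun x : ℕ => (x : ℤ)) hqk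
            push_cast at hqk'
            linarith [h9, hqk']
          have hBz : (nLc b : ℤ) - (pc k b : ℤ) = (B : ℤ) := by
            have : ((B + pc k b : ℕ) : ℤ) = (nLc b : ℤ) := by exact_mod_cast congrArg (fun x : ℕ => (x : ℤ)) e
            push_cast at this
            omega
          have hnh : (nHc b : ℤ) = (b.count Item.H : ℤ) := rfl
          zify [hple]
          push_cast at hc2
          linarith [hc2, hjnz, hBz, hnh]

lemma gc_lt (m k : ℕ) (hk : 0 < k) (b : List Item)
    (hcap : nHc b + Qc k b * k ≤ m * k + h0c k b) (hs : b.length ≤ m * k)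
    (j : Fin b.length) : gc k b j < m := by
  have hcl : nLc b ≤ b.length := List.count_le_length
  have hQm : Qc k b * k ≤ m * k := by
    by_cases hn : nLc b = 0
    · rw [Qc, if_pos hn, Nat.zero_mul]; exact Nat.zero_le _
    · by_cases hp : pc k b = 0
      · rw [Qc_mul0 k hk b hp hn]; omega
      · rw [Qc_mul k hk b hp]
        have hpk : pc k b < k := Nat.mod_lt _ hk
        have hple : pc k b ≤ nLc b := Nat.mod_le _ _
        have e := pc_n k b
        obtain ⟨q, hq⟩ : ∃ q, nLc b / k = q := ⟨_, rfl⟩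
        rw [hq] at e
        have hqm : q < m := by
          have hkm : k * m = m * k := mul_comm _ _
          have h2 : k * q < k * m := by omega
          exact Nat.lt_of_mul_lt_mul_left h2
        have h3 : (q+1) * k ≤ m * k := Nat.mul_le_mul_right k hqm
        have h4 : (q+1) * k = k * q + k := by ring
        omega
  have hQm' : Qc k b ≤ m := Nat.le_of_mul_le_mul_right (by omega) hk
  by_cases hjL : b.get j = Item.L
  · rw [gc, if_pos hjL]
    have hn : nLc b ≠ 0 := by
      have h1 : 1 ≤ Lnum b (j:ℕ) := num_pos b Item.L (j:ℕ) j.2 (by simpa using hjL)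
      have h2 := Lnum_le b (j:ℕ)
      omega
    have h1 : (Lnum b (j:ℕ) - 1)/k ≤ QLc k b :=
      Nat.div_le_div_right (by have := Lnum_le b (j:ℕ); omega)
    have hQval : Qc k b = QLc k b + 1 := by rw [Qc, if_neg hn]
    omega
  · have hH : b.get j = Item.H := Item.not_L_eq_H _ hjL
    by_cases hch : chosenc k b j
    · rw [gc, if_neg hjL, if_pos hch]
      have hn : nLc b ≠ 0 := by
        intro h0
        exact hch.1 (by rw [pc, h0]; exact Nat.zero_mod _)
      have hQval : Qc k b = QLc k b + 1 := by rw [Qc, if_neg hn]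
      omega
    · rw [gc, if_neg hjL, if_neg hch]
      have hgt := hnc_gt k hk b j hH hch
      have hle : Hnum b (j:ℕ) ≤ nHc b := Hnum_le b (j:ℕ)
      have h5 : Qc k b < m := by
        have h5' : Qc k b * k < m * k := by omega
        exact Nat.lt_of_mul_lt_mul_right h5'
      have h6 : Hnum b (j:ℕ) - h0c k b - 1 < (m - Qc k b) * k := by
        have e5 : (m - Qc k b) * k = m * k - Qc k b * k := Nat.sub_mul _ _ _
        omega
      have h7 : (Hnum b (j:ℕ) - h0c k b - 1)/k < m - Qc k b :=
        (Nat.div_lt_iff_lt_mul hk).mpr h6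
      obtain ⟨D, hD⟩ : ∃ D, (Hnum b (j:ℕ) - h0c k b - 1)/k = D := ⟨_, rfl⟩
      rw [hD] at h7 ⊢
      omega

lemma sufficiency (m k : ℕ) (hm : 0 < m) (hk : 0 < k) (b : List Item)
    (hs : b.length ≤ m * k)
    (hcond : ∀ i : Fin b.length, b.get i = Item.L →
        (k ≤ (b.take (i + 1)).count Item.H + Fmod k ((b.take (i + 1)).count Item.L)) ∨
        ((b.count Item.H : ℤ) - ((b.take (i + 1)).count Item.H : ℤ) ≤
          (m * k : ℤ) - (((i : ℤ) + 1) - ((((i : ℕ) + 1) % k : ℕ) : ℤ) + (k : ℤ)))) :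
    FeasibleLoading m k b := by
  have hcap := cap m k hm hk b hs hcond
  refine ⟨fun j => ⟨gc k b j, gc_lt m k hk b hcap hs j⟩, ?_, ?_⟩
  · intro t
    refine le_trans (le_of_eq ?_) (gc_card k hk b (t : ℕ))
    congr 1
    ext j
    simp only [Finset.mem_filter, Finset.mem_univ, true_and]
    constructor
    · intro hj
      exact congrArg Fin.val hj
    · intro hj
      exact Fin.ext hj
  · intro i j hij hf hiL
    exact gc_ord k hk b i j hij (congrArg Fin.val hf) hiL

lemma necessity (m k : ℕ) (hk : 0 < k) (b : List Item)
    (f : Fin b.length → Fin m)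
    (hcard : ∀ s : Fin m, (Finset.univ.filter (fun i => f i = s)).card ≤ k)
    (hord : ∀ i j : Fin b.length, i < j → f i = f j → b.get i = Item.L → b.get j = Item.L)
    (i : Fin b.length) (hL : b.get i = Item.L)
    (hc1 : ¬ (k ≤ (b.take (i+1)).count Item.H + Fmod k ((b.take (i+1)).count Item.L))) :
    ((b.count Item.H : ℤ) - ((b.take (i+1)).count Item.H : ℤ) ≤
      (m * k : ℤ) - (((i : ℤ) + 1) - ((((i : ℕ) + 1) % k : ℕ) : ℤ) + (k : ℤ))) := by
  set l : ℕ := (i : ℕ) + 1 with hl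
  set aH : ℕ := (b.take l).count Item.H with haH
  set aL : ℕ := (b.take l).count Item.L with haLdef
  -- from ¬c1
  have haLk : aL % k ≠ 0 := by
    intro h0
    rw [Fmod, if_neg (by simpa using h0)] at hc1
    omega
  have hlt : aH + aL % k < k := by
    rw [Fmod, if_pos haLk] at hc1
    omega
  -- aH + aL = l
  have hlen : (b.take l).length = l := by
    rw [List.length_take]
    have := i.2
    omega
  have hsum : aH + aL = l := by rw [haH, haLdef, count_HL, hlen]
  -- dirty stacks
  set D : Finset (Fin m) := Finset.univ.filter
    (fun t : Fin m => ∃ j : Fin b.length, f j = t ∧ (j : ℕ) < l ∧ b.get j = Item.L) with hD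
  set d : ℕ := D.card with hd
  have hdm : d ≤ m := by
    rw [hd]
    calc D.card ≤ (Finset.univ : Finset (Fin m)).card := Finset.card_le_card (Finset.subset_univ D)
    _ = m := by simp
  -- late H items go to clean stacks
  set R : Finset (Fin b.length) := Finset.univ.filter
    (fun j : Fin b.length => l ≤ (j : ℕ) ∧ b.get j = Item.H) with hR
  have hRclean : ∀ j ∈ R, f j ∈ Dᶜ := by
    intro j hj
    rw [hR, Finset.mem_filter] at hj
    rw [Finset.mem_compl]
    intro hfj
    rw [hD, Finset.mem_filter] at hfj
    obtain ⟨-, j', hfj', hj'l, hj'L⟩ := hfj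
    have hlt' : j' < j := by
      rw [Fin.lt_def]; omega
    have := hord j' j hlt' (hfj'.trans rfl) hj'L
    rw [this] at hj
    exact Item.noConfusion hj.2.2.symm
  have hRcard : R.card ≤ (m - d) * k := by
    rw [Finset.card_eq_sum_card_fiberwise hRclean]
    calc ∑ t ∈ Dᶜ, (R.filter (fun j => f j = t)).card
        ≤ ∑ t ∈ Dᶜ, k := by
          apply Finset.sum_le_sum
          intro t _
          calc (R.filter (fun j => f j = t)).card
              ≤ (Finset.univ.filter (fun j => f j = t)).card := by
                apply Finset.card_le_card
                intro j hj
                rw [Finset.mem_filter] at hj ⊢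
                exact ⟨Finset.mem_univ j, hj.2⟩
          _ ≤ k := hcard t
    _ = (m - d) * k := by
      rw [Finset.sum_const, smul_eq_mul, Finset.card_compl]
      simp [hd]
  -- L items go to dirty stacks
  have haLcard : aL ≤ d * k := by
    have h1 : aL = (Finset.univ.filter
        (fun j : Fin b.length => (j : ℕ) < l ∧ b.get j = Item.L)).card := count_take_card b Item.L l
    have h2 : ∀ j ∈ (Finset.univ.filter
        (fun j : Fin b.length => (j : ℕ) < l ∧ b.get j = Item.L)), f j ∈ D := by
      intro j hj
      rw [Finset.mem_filter] at hj
      rw [hD, Finset.mem_filter]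
      exact ⟨Finset.mem_univ _, j, rfl, hj.2⟩
    rw [h1, Finset.card_eq_sum_card_fiberwise h2]
    calc ∑ t ∈ D, ((Finset.univ.filter
          (fun j : Fin b.length => (j : ℕ) < l ∧ b.get j = Item.L)).filter (fun j => f j = t)).card
        ≤ ∑ t ∈ D, k := by
          apply Finset.sum_le_sum
          intro t _
          calc _ ≤ (Finset.univ.filter (fun j => f j = t)).card := by
                apply Finset.card_le_card
                intro j hj
                rw [Finset.mem_filter] at hj ⊢
                exact ⟨Finset.mem_univ j, hj.2⟩
          _ ≤ k := hcard t
    _ = d * k := by rw [Finset.sum_const, smul_eq_mul, hd]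
  -- d*k lower bound
  have hdk : aL - aL % k + k ≤ d * k := by
    have e := Nat.div_add_mod aL k
    have h1 : k * (aL / k) < d * k := by omega
    have h1' : (aL / k) * k < d * k := by rwa [mul_comm] at h1
    have hq : aL / k < d := Nat.lt_of_mul_lt_mul_right h1'
    have h2 : (aL / k + 1) * k ≤ d * k := Nat.mul_le_mul_right k hq
    have h3 : (aL / k + 1) * k = k * (aL / k) + k := by ring
    omega
  -- total H count
  have hcount : b.count Item.H = aH + R.card := by
    rw [count_card b Item.H, haH, count_take_card b Item.H l]
    rw [← Finset.card_union_of_disjoint (by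
      rw [Finset.disjoint_left]
      intro j hj1 hj2
      rw [Finset.mem_filter] at hj1
      rw [hR, Finset.mem_filter] at hj2
      omega)]
    congr 1
    ext j
    simp only [Finset.mem_filter, Finset.mem_union, Finset.mem_univ, true_and, hR]
    constructor
    · intro h
      by_cases hjl : (j : ℕ) < l
      · exact Or.inl ⟨hjl, h⟩
      · exact Or.inr ⟨by omega, h⟩
    · rintro (⟨-, h⟩ | ⟨-, h⟩) <;> exact h
  -- l % k
  have hmod : l % k = aH + aL % k := by
    have e := Nat.div_add_mod aL k
    have h1 : l = (aH + aL % k) + k * (aL / k) := by omega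
    rw [h1, Nat.add_mul_mod_self_left, Nat.mod_eq_of_lt hlt]
  -- conclude
  have hRcard' : (R.card : ℤ) ≤ ((m : ℤ) - d) * k := by
    have h := hRcard
    zify [hdm] at h
    exact h
  have hdk2 : (aL : ℤ) - ((aL % k : ℕ) : ℤ) + k ≤ (d : ℤ) * k := by
    have h := hdk
    zify [Nat.mod_le aL k] at h
    push_cast at h
    exact h
  have hc : (b.count Item.H : ℤ) = (aH : ℤ) + R.card := by exact_mod_cast hcount
  have hm' : ((l % k : ℕ) : ℤ) = (aH : ℤ) + ((aL % k : ℕ) : ℤ) := by exact_mod_cast hmod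
  have hs' : (aH : ℤ) + (aL : ℤ) = (l : ℤ) := by exact_mod_cast hsum
  have hgoal : ((b.count Item.H : ℤ)) - aH ≤ (m : ℤ) * k - ((l : ℤ) - ((l % k : ℕ) : ℤ) + k) := by
    nlinarith [hRcard', hdk2]
  have hli : ((l : ℕ) : ℤ) = (i : ℤ) + 1 := by rw [hl]; push_cast; ring
  rw [hli] at hgoal
  exact hgoal


theorem stmt6 (m k : ℕ) (hm : 0 < m) (hk : 0 < k) (b : List Item)
    (hs : b.length ≤ m * k) :
    FeasibleLoading m k b ↔
      ∀ i : Fin b.length, b.get i = Item.L →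
        (k ≤ (b.take (i + 1)).count Item.H + Fmod k ((b.take (i + 1)).count Item.L)) ∨
        ((b.count Item.H : ℤ) - ((b.take (i + 1)).count Item.H : ℤ) ≤
          (m * k : ℤ) - (((i : ℤ) + 1) - ((((i : ℕ) + 1) % k : ℕ) : ℤ) + (k : ℤ))) := by
  constructor
  · rintro ⟨f, hcard, hord⟩ i hL
    by_cases hc1 : k ≤ (b.take (i + 1)).count Item.H + Fmod k ((b.take (i + 1)).count Item.L)
    · exact Or.inl hc1
    · exact Or.inr (necessity m k hk b f hcard hord i hL hc1)
  · intro hcond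
    exact sufficiency m k hm hk b hs hcond
end

section
/- (Reduction lemma, fragile-rich case.) Suppose the sequence S contains at least k items of type L, and let S̄ be the subsequence of S obtained by deleting the first k items of type L. If S admits a feasible loading into m+1 stacks of height k, then S̄ admits a feasible loading into m stacks of height k. Conversely, if S̄ admits a feasible loading into m stacks, then S admits a feasible loading into m+1 stacks. -/
/-- Remove the first `n` occurrences of `L` from a list, preserving the relative
order of all remaining items. -/
def removeL : ℕ → List Item → List Item
  | _, [] => []
  | 0, l => l
  | n + 1, Item.L :: t => removeL n t
  | n + 1, Item.H :: t => Item.H :: removeL (n + 1) t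



instance inst_s7 : LawfulBEq Item where
  eq_of_beq {a b} h := by cases a <;> cases b <;> first | rfl | exact absurd h (by decide)
  rfl {a} := by cases a <;> rfl


lemma removeL_length : ∀ (k : ℕ) (b : List Item),
    (removeL k b).length + min k (b.count Item.L) = b.length := by
  intro k b
  induction b generalizing k with
  | nil => simp [removeL]
  | cons x t ih =>
    cases k with
    | zero => simp [removeL]
    | succ k =>
      cases x with
      | L =>
        have := ih k
        simp only [removeL, List.count_cons, List.length_cons]
        simp
        omega
      | H =>
        have := ih (k+1)
        have hc : t.count Item.L ≤ t.length := List.count_le_length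
        simp only [removeL, List.count_cons, List.length_cons]
        norm_num
        rw [if_neg (by decide : ¬ (Item.H = Item.L))]
        omega

lemma removeL_embed : ∀ (k : ℕ) (b : List Item),
    ∃ e : Fin (removeL k b).length → Fin b.length,
      StrictMono e ∧ (∀ j, (removeL k b).get j = b.get (e j)) ∧
      ∀ i : Fin b.length, (∃ j, e j = i) ↔
        ¬(b.get i = Item.L ∧ (b.take i).count Item.L < k) := by
  intro k b
  induction b generalizing k with
  | nil =>
    refine ⟨fun j => Fin.elim0 (by simpa [removeL] using j), ?_, ?_, ?_⟩
    · intro a; exact absurd a.2 (by simp [removeL])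
    · intro j; exact absurd j.2 (by simp [removeL])
    · intro i; exact absurd i.2 (by simp)
  | cons x t ih =>
    cases k with
    | zero =>
      refine ⟨fun j => Fin.cast (by rfl) j, ?_, ?_, ?_⟩
      · intro a b h; exact h
      · intro j; rfl
      · intro i; simp only [Nat.not_lt_zero, and_false, not_false_iff, iff_true]
        exact ⟨Fin.cast (by rfl) i, rfl⟩
    | succ k =>
      cases x with
      | L =>
        obtain ⟨e', hmono, hget, hiff⟩ := ih k
        refine ⟨fun j => (e' j).succ, ?_, ?_, ?_⟩
        · intro a b h
          exact Fin.succ_lt_succ_iff.mpr (hmono h)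
        · intro j
          exact hget j
        · intro i
          induction i using Fin.cases with
          | zero =>
            constructor
            · rintro ⟨j, hj⟩; exact absurd hj (Fin.succ_ne_zero _)
            · intro h; exact absurd ⟨rfl, by simp⟩ h
          | succ i' =>
            have hcnt : ((Item.L :: t).take ↑i'.succ).count Item.L
                = (t.take ↑i').count Item.L + 1 := by
              simp [Fin.val_succ, List.take_succ_cons, List.count_cons]
            have hg : (Item.L :: t).get i'.succ = t.get i' := by
              simp
            have := hiff i'
            constructor
            · rintro ⟨j, hj⟩
              have hj' : e' j = i' := Fin.succ_injective _ hj
              have h2 := this.mp ⟨j, hj'⟩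
              intro hcon
              rw [hg] at hcon
              rw [hcnt] at hcon
              exact h2 ⟨hcon.1, by omega⟩
            · intro h
              obtain ⟨j, hj⟩ := this.mpr (fun hcon => h ⟨by rw [hg]; exact hcon.1, by rw [hcnt]; omega⟩)
              exact ⟨j, by simpa using congrArg Fin.succ hj⟩
      | H =>
        obtain ⟨e', hmono, hget, hiff⟩ := ih (k+1)
        have hrw : removeL (k+1) (Item.H :: t) = Item.H :: removeL (k+1) t := rfl
        rw [hrw]
        refine ⟨Fin.cases (0 : Fin (t.length + 1)) (fun j => (e' j).succ), ?_, ?_, ?_⟩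
        · intro a b hab
          induction a using Fin.cases with
          | zero =>
            induction b using Fin.cases with
            | zero => exact absurd hab (lt_irrefl _)
            | succ b' => simp only [Fin.cases_zero, Fin.cases_succ]; exact Fin.succ_pos _
          | succ a' =>
            induction b using Fin.cases with
            | zero => exact absurd hab (Fin.not_lt_zero _)
            | succ b' =>
              simp only [Fin.cases_succ]
              have : a' < b' := Fin.succ_lt_succ_iff.mp hab
              exact Fin.succ_lt_succ_iff.mpr (hmono this)
        · intro j
          induction j using Fin.cases with
          | zero => rfl
          | succ j' =>
            simp only [Fin.cases_succ]
            simpa using hget j'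
        · intro i
          induction i using Fin.cases with
          | zero =>
            constructor
            · rintro - ⟨hcon, -⟩; exact absurd hcon (by simp)
            · intro _; exact ⟨⟨0, Nat.succ_pos _⟩, by apply Fin.cases_zero⟩
          | succ i' =>
            have hcnt : ((Item.H :: t).take ↑i'.succ).count Item.L
                = (t.take ↑i').count Item.L := by
              simp [Fin.val_succ, List.take_succ_cons, List.count_cons]
            have hg : (Item.H :: t).get i'.succ = t.get i' := by simp
            have := hiff i'
            constructor
            · rintro ⟨j, hj⟩
              induction j using Fin.cases with
              | zero =>
                simp only [Fin.cases_zero] at hj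
                exact absurd hj.symm (Fin.succ_ne_zero i')
              | succ j' =>
                simp only [Fin.cases_succ] at hj
                have h2 := this.mp ⟨j', Fin.succ_injective _ hj⟩
                intro hcon
                rw [hg] at hcon; rw [hcnt] at hcon
                exact h2 hcon
            · intro h
              obtain ⟨j, hj⟩ := this.mpr (fun hcon => h ⟨by rw [hg]; exact hcon.1, by rw [hcnt]; exact hcon.2⟩)
              exact ⟨j.succ, by simpa using congrArg Fin.succ hj⟩

lemma count_take_lt (b : List Item) (i j : Fin b.length) (hij : i < j)
    (hbi : b.get i = Item.L) :
    (b.take i).count Item.L < (b.take j).count Item.L := by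
  have h1 : (b.take (↑i+1)).count Item.L = (b.take ↑i).count Item.L + 1 := by
    rw [List.take_succ]
    rw [List.getElem?_eq_getElem i.isLt]
    have : b[(i : ℕ)] = Item.L := by rw [← List.get_eq_getElem]; exact hbi
    simp [this]
  have h2 : ((b.take (↑i+1)).count Item.L) ≤ (b.take ↑j).count Item.L := by
    refine List.Sublist.count_le _ ?_
    exact (List.take_prefix_take_left (l := b) hij).sublist
  omega

lemma card_firstL (k : ℕ) (b : List Item) :
    (Finset.univ.filter fun i : Fin b.length =>
      b.get i = Item.L ∧ (b.take ↑i).count Item.L < k).card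
      = min k (b.count Item.L) := by
  classical
  obtain ⟨e, hmono, hget, hiff⟩ := removeL_embed k b
  have him : (Finset.univ.image e)
      = Finset.univ.filter (fun i : Fin b.length =>
        ¬(b.get i = Item.L ∧ (b.take ↑i).count Item.L < k)) := by
    ext i
    simp only [Finset.mem_image, Finset.mem_filter, Finset.mem_univ, true_and]
    exact hiff i
  have hcard1 : (Finset.univ.image e).card = (removeL k b).length := by
    rw [Finset.card_image_of_injective _ hmono.injective]
    simp
  have hsplit := Finset.card_filter_add_card_filter_not
    (s := (Finset.univ : Finset (Fin b.length)))
    (p := fun i : Fin b.length => b.get i = Item.L ∧ (b.take ↑i).count Item.L < k)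
  have hlen := removeL_length k b
  have hcle : b.count Item.L ≤ b.length := List.count_le_length
  rw [him] at hcard1
  simp only [Finset.card_univ, Fintype.card_fin] at hsplit
  omega

lemma back_dir (m k : ℕ) (b : List Item) (hL : k ≤ b.count Item.L)
    (h : FeasibleLoading m k (removeL k b)) : FeasibleLoading (m+1) k b := by
  classical
  obtain ⟨g, hgc, hgf⟩ := h
  obtain ⟨e, hmono, hget, hiff⟩ := removeL_embed k b
  have einj : Function.Injective e := hmono.injective
  refine ⟨fun i => if h : ∃ j, e j = i then (g h.choose).castSucc else Fin.last m, ?_, ?_⟩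
  · intro s
    induction s using Fin.lastCases with
    | last =>
      have : (Finset.univ.filter (fun i =>
          (if h : ∃ j, e j = i then (g h.choose).castSucc else Fin.last m) = Fin.last m))
          = Finset.univ.filter (fun i : Fin b.length =>
            b.get i = Item.L ∧ (b.take ↑i).count Item.L < k) := by
        ext i
        simp only [Finset.mem_filter, Finset.mem_univ, true_and]
        by_cases hi : ∃ j, e j = i
        · rw [dif_pos hi]
          constructor
          · intro hcon
            exact absurd hcon (Fin.ne_of_lt (Fin.castSucc_lt_last _))
          · intro hcon
            exact absurd ((hiff i).mp hi) (not_not_intro hcon)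
        · rw [dif_neg hi]
          simp only [true_iff]
          by_contra hcon
          exact hi ((hiff i).mpr hcon)
      rw [this, card_firstL]
      omega
    | cast s =>
      have : (Finset.univ.filter (fun i =>
          (if h : ∃ j, e j = i then (g h.choose).castSucc else Fin.last m) = s.castSucc))
          = (Finset.univ.filter (fun j => g j = s)).image e := by
        ext i
        simp only [Finset.mem_filter, Finset.mem_univ, true_and, Finset.mem_image]
        by_cases hi : ∃ j, e j = i
        · rw [dif_pos hi]
          constructor
          · intro hcast
            exact ⟨hi.choose, Fin.castSucc_injective _ hcast, hi.choose_spec⟩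
          · rintro ⟨j, hj, hje⟩
            have : hi.choose = j := einj (hi.choose_spec.trans hje.symm)
            rw [this, hj]
        · rw [dif_neg hi]
          constructor
          · intro hcon
            exact absurd hcon.symm (Fin.ne_of_lt (Fin.castSucc_lt_last _))
          · rintro ⟨j, hj, hje⟩
            exact absurd ⟨j, hje⟩ hi
      rw [this, Finset.card_image_of_injective _ einj]
      exact hgc s
  · intro i1 i2 hlt hfeq hbL
    dsimp only at hfeq
    by_cases h1 : ∃ j, e j = i1 <;> by_cases h2 : ∃ j, e j = i2
    · rw [dif_pos h1, dif_pos h2] at hfeq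
      have hgeq : g h1.choose = g h2.choose := Fin.castSucc_injective _ hfeq
      have hjlt : h1.choose < h2.choose := by
        rw [← hmono.lt_iff_lt, h1.choose_spec, h2.choose_spec]
        exact hlt
      have hb1 : (removeL k b).get h1.choose = Item.L := by
        rw [hget h1.choose, h1.choose_spec]; exact hbL
      have := hgf _ _ hjlt hgeq hb1
      rw [hget h2.choose, h2.choose_spec] at this
      exact this
    · rw [dif_pos h1, dif_neg h2] at hfeq
      exact absurd hfeq (Fin.ne_of_lt (Fin.castSucc_lt_last _))
    · rw [dif_neg h1, dif_pos h2] at hfeq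
      exact absurd hfeq.symm (Fin.ne_of_lt (Fin.castSucc_lt_last _))
    · have := (hiff i2)
      by_contra hcon
      exact h2 (this.mpr (fun hc => hcon hc.1))

lemma avoid_stack {m k : ℕ} {c : List Item} (s0 : Fin (m+1))
    (g : Fin c.length → Fin (m+1)) (hne : ∀ j, g j ≠ s0)
    (hc : ∀ s : Fin (m+1), s ≠ s0 → (Finset.univ.filter (fun j => g j = s)).card ≤ k)
    (hf : ∀ i j, i < j → g i = g j → c.get i = Item.L → c.get j = Item.L) :
    FeasibleLoading m k c := by
  classical
  have hex : ∀ j, ∃ z : Fin m, s0.succAbove z = g j :=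
    fun j => Fin.exists_succAbove_eq (hne j)
  refine ⟨fun j => (hex j).choose, ?_, ?_⟩
  · intro s
    have : (Finset.univ.filter (fun j => (hex j).choose = s))
        = Finset.univ.filter (fun j => g j = s0.succAbove s) := by
      ext j
      simp only [Finset.mem_filter, Finset.mem_univ, true_and]
      constructor
      · intro hj; rw [← (hex j).choose_spec, hj]
      · intro hj
        exact Fin.succAbove_right_injective (p := s0) ((hex j).choose_spec.trans hj)
    rw [this]
    exact hc _ (Fin.succAbove_ne s0 s)
  · intro i j hij heq hiL
    dsimp only at heq
    refine hf i j hij ?_ hiL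
    rw [← (hex i).choose_spec, ← (hex j).choose_spec, heq]

lemma fwd_dir (m k : ℕ) (hk : 0 < k) (b : List Item) (hL : k ≤ b.count Item.L)
    (h : FeasibleLoading (m+1) k b) : FeasibleLoading m k (removeL k b) := by
  classical
  obtain ⟨f, hfc, hff⟩ := h
  obtain ⟨e, hmono, hget, hiff⟩ := removeL_embed k b
  have einj : Function.Injective e := hmono.injective
  set R : Finset (Fin b.length) := Finset.univ.filter
    (fun i => b.get i = Item.L ∧ (b.take ↑i).count Item.L < k) with hRdef
  have hRcard : R.card = k := by
    rw [hRdef, card_firstL]; omega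
  have hRne : R.Nonempty := by
    rw [← Finset.card_pos, hRcard]; exact hk
  set p := R.max' hRne with hpdef
  have hpR : p ∈ R := R.max'_mem hRne
  have hpL : b.get p = Item.L := (Finset.mem_filter.mp hpR).2.1
  set s0 := f p with hs0def
  -- any L item not in R comes after every element of R
  have hT2 : ∀ i : Fin b.length, i ∉ R → b.get i = Item.L → ∀ j ∈ R, j < i := by
    intro i hiR hiL j hjR
    rcases lt_trichotomy j i with h | h | h
    · exact h
    · exact absurd (h ▸ hjR) hiR
    · exfalso
      have hcnt := count_take_lt b i j h hiL
      have hjk := (Finset.mem_filter.mp hjR).2.2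
      exact hiR (Finset.mem_filter.mpr ⟨Finset.mem_univ _, hiL, by omega⟩)
  -- any H item in a stack containing an R element comes before that element
  have hHlt : ∀ i : Fin b.length, b.get i = Item.H → ∀ j ∈ R, f j = f i → i < j := by
    intro i hiH j hjR hfji
    have hjL : b.get j = Item.L := (Finset.mem_filter.mp hjR).2.1
    rcases lt_trichotomy i j with h | h | h
    · exact h
    · rw [h, hjL] at hiH; exact absurd hiH (by simp)
    · exact absurd (hff j i h hfji hjL) (by rw [hiH]; simp)
  set M : Finset (Fin b.length) := Finset.univ.filter (fun i => i ∉ R ∧ f i = s0) with hMdef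
  set rl : List (Fin b.length) := R.toList.filter (fun j => f j ≠ s0) with hrldef
  have hrl_nodup : rl.Nodup := (Finset.nodup_toList R).filter _
  have hrl_mem : ∀ x ∈ rl, x ∈ R ∧ f x ≠ s0 := by
    intro x hx
    rw [hrldef, List.mem_filter] at hx
    exact ⟨(Finset.mem_toList).mp hx.1, by simpa using hx.2⟩
  have hrl_len : rl.length = (R.filter (fun j => f j ≠ s0)).card := by
    have h1 : ((rl : List (Fin b.length)) : Multiset (Fin b.length))
        = Multiset.filter (fun j => f j ≠ s0) R.1 := by
      rw [hrldef, ← Finset.coe_toList R, Multiset.filter_coe]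
    have h2 : Multiset.card ((rl : List (Fin b.length)) : Multiset (Fin b.length))
        = rl.length := Multiset.coe_card _
    rw [← h2, h1]
    rfl
  have hcRsplit : (R.filter (fun j => f j = s0)).card
      + (R.filter (fun j => f j ≠ s0)).card = k := by
    rw [← hRcard]
    exact Finset.card_filter_add_card_filter_not _
  have hMcard : M.card + (R.filter (fun j => f j = s0)).card ≤ k := by
    have hdisj : Disjoint M (R.filter (fun j => f j = s0)) := by
      rw [Finset.disjoint_left]
      intro a haM haR
      exact ((Finset.mem_filter.mp haM).2.1) (Finset.mem_filter.mp haR).1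
    have hsub : M ∪ (R.filter (fun j => f j = s0)) ⊆
        Finset.univ.filter (fun i => f i = s0) := by
      intro a ha
      rcases Finset.mem_union.mp ha with h | h
      · exact Finset.mem_filter.mpr ⟨Finset.mem_univ _, (Finset.mem_filter.mp h).2.2⟩
      · exact Finset.mem_filter.mpr ⟨Finset.mem_univ _, (Finset.mem_filter.mp h).2⟩
    calc M.card + (R.filter (fun j => f j = s0)).card
        = (M ∪ (R.filter (fun j => f j = s0))).card := (Finset.card_union_of_disjoint hdisj).symm
      _ ≤ (Finset.univ.filter (fun i => f i = s0)).card := Finset.card_le_card hsub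
      _ ≤ k := hfc s0
  have hMle : M.card ≤ rl.length := by omega
  have hidx : ∀ (i : Fin b.length) (hi : i ∈ M),
      ((M.orderIsoOfFin rfl).symm ⟨i, hi⟩ : ℕ) < rl.length := by
    intro i hi
    exact lt_of_lt_of_le (Fin.is_lt _) hMle
  set jmap : ∀ i : Fin b.length, i ∈ M → Fin b.length :=
    fun i hi => rl.get ⟨((M.orderIsoOfFin rfl).symm ⟨i, hi⟩ : ℕ), hidx i hi⟩ with hjmapdef
  have hjmap_mem : ∀ (i) (hi : i ∈ M), jmap i hi ∈ R ∧ f (jmap i hi) ≠ s0 := by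
    intro i hi
    exact hrl_mem _ (List.get_mem _ _)
  have hjmap_inj : ∀ (i1) (h1 : i1 ∈ M) (i2) (h2 : i2 ∈ M),
      jmap i1 h1 = jmap i2 h2 → i1 = i2 := by
    intro i1 h1 i2 h2 heq
    rw [hjmapdef] at heq
    have h3 := (hrl_nodup.get_inj_iff).mp heq
    have h4 : (M.orderIsoOfFin rfl).symm ⟨i1, h1⟩ = (M.orderIsoOfFin rfl).symm ⟨i2, h2⟩ :=
      Fin.val_injective (by simpa using congrArg Fin.val h3)
    have h5 := (M.orderIsoOfFin rfl).symm.injective h4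
    simpa using congrArg Subtype.val h5
  set g' : Fin b.length → Fin (m+1) :=
    fun i => if hi : i ∈ M then f (jmap i hi) else f i with hg'def
  have heR : ∀ j, e j ∉ R := by
    intro j hj
    have h1 := (hiff (e j)).mp ⟨j, rfl⟩
    exact h1 (Finset.mem_filter.mp hj).2
  apply avoid_stack s0 (fun j => g' (e j))
  · -- never uses s0
    intro j
    rw [hg'def]
    dsimp only
    by_cases hm : e j ∈ M
    · rw [dif_pos hm]; exact (hjmap_mem _ hm).2
    · rw [dif_neg hm]
      intro hcon
      exact hm (Finset.mem_filter.mpr ⟨Finset.mem_univ _, heR j, hcon⟩)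
  · -- counts
    intro s hs
    have hcard_e : (Finset.univ.filter (fun j => g' (e j) = s)).card
        = ((Finset.univ.filter (fun j => g' (e j) = s)).image e).card :=
      (Finset.card_image_of_injective _ einj).symm
    rw [hcard_e]
    have hsub : (Finset.univ.filter (fun j => g' (e j) = s)).image e ⊆
        Finset.univ.filter (fun i => i ∉ R ∧ g' i = s) := by
      intro i hi
      obtain ⟨j, hj, rfl⟩ := Finset.mem_image.mp hi
      exact Finset.mem_filter.mpr ⟨Finset.mem_univ _, heR j, (Finset.mem_filter.mp hj).2⟩
    refine le_trans (Finset.card_le_card hsub) ?_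
    set B := Finset.univ.filter (fun i => i ∉ R ∧ g' i = s) with hBdef
    have hBsplit := Finset.card_filter_add_card_filter_not
      (s := B) (p := fun i => i ∈ M)
    have hB1 : (B.filter (fun i => i ∈ M)).card ≤ (R.filter (fun j => f j = s)).card := by
      refine Finset.card_le_card_of_injOn
        (fun i => if hi : i ∈ M then jmap i hi else p) ?_ ?_
      · intro i hi
        dsimp only
        have hiM : i ∈ M := (Finset.mem_filter.mp hi).2
        rw [dif_pos hiM]
        have hgi : g' i = s := (Finset.mem_filter.mp (Finset.mem_filter.mp hi).1).2.2
        rw [hg'def] at hgi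
        dsimp only at hgi
        rw [dif_pos hiM] at hgi
        exact Finset.mem_filter.mpr ⟨(hjmap_mem i hiM).1, hgi⟩
      · intro i1 h1 i2 h2 heq
        dsimp only at heq
        have h1M : i1 ∈ M := (Finset.mem_filter.mp h1).2
        have h2M : i2 ∈ M := (Finset.mem_filter.mp h2).2
        rw [dif_pos h1M, dif_pos h2M] at heq
        exact hjmap_inj _ h1M _ h2M heq
    have hB2 : (B.filter (fun i => i ∉ M)).card + (R.filter (fun j => f j = s)).card ≤ k := by
      have hdisj : Disjoint (B.filter (fun i => i ∉ M)) (R.filter (fun j => f j = s)) := by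
        rw [Finset.disjoint_left]
        intro a ha haR
        exact (Finset.mem_filter.mp (Finset.mem_filter.mp ha).1).2.1 (Finset.mem_filter.mp haR).1
      have hsub2 : (B.filter (fun i => i ∉ M)) ∪ (R.filter (fun j => f j = s)) ⊆
          Finset.univ.filter (fun i => f i = s) := by
        intro a ha
        rcases Finset.mem_union.mp ha with h | h
        · have haB := Finset.mem_filter.mp h
          have hga : g' a = s := (Finset.mem_filter.mp haB.1).2.2
          rw [hg'def] at hga
          dsimp only at hga
          rw [dif_neg haB.2] at hga
          exact Finset.mem_filter.mpr ⟨Finset.mem_univ _, hga⟩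
        · exact Finset.mem_filter.mpr ⟨Finset.mem_univ _, (Finset.mem_filter.mp h).2⟩
      calc (B.filter (fun i => i ∉ M)).card + (R.filter (fun j => f j = s)).card
          = ((B.filter (fun i => i ∉ M)) ∪ (R.filter (fun j => f j = s))).card :=
            (Finset.card_union_of_disjoint hdisj).symm
        _ ≤ (Finset.univ.filter (fun i => f i = s)).card := Finset.card_le_card hsub2
        _ ≤ k := hfc s
    omega
  · -- feasibility
    intro j1 j2 hlt heq hL1
    rw [hget j1] at hL1
    rw [hget j2]
    have hi12 : e j1 < e j2 := hmono hlt
    rcases hb2 : b.get (e j2) with _ | _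
    · rfl
    · exfalso
      have hp1 : p < e j1 := hT2 (e j1) (heR j1) hL1 p hpR
      by_cases hm2 : e j2 ∈ M
      · have hfi2 : f (e j2) = s0 := (Finset.mem_filter.mp hm2).2.2
        have : e j2 < p := hHlt (e j2) hb2 p hpR (by rw [hfi2])
        exact lt_irrefl _ ((this.trans hp1).trans hi12)
      · by_cases hm1 : e j1 ∈ M
        · rw [hg'def] at heq
          dsimp only at heq
          rw [dif_pos hm1, dif_neg hm2] at heq
          have hj0R : jmap (e j1) hm1 ∈ R := (hjmap_mem _ hm1).1
          have : e j2 < jmap (e j1) hm1 := hHlt (e j2) hb2 _ hj0R heq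
          have hle : jmap (e j1) hm1 ≤ p := R.le_max' _ hj0R
          exact lt_irrefl _ (((this.trans_le hle).trans hp1).trans hi12)
        · rw [hg'def] at heq
          dsimp only at heq
          rw [dif_neg hm1, dif_neg hm2] at heq
          exact absurd (hff (e j1) (e j2) hi12 heq hL1) (by rw [hb2]; simp)

theorem stmt7 (m k : ℕ) (hk : 0 < k) (b : List Item)
    (hL : k ≤ b.count Item.L) :
    FeasibleLoading (m + 1) k b ↔ FeasibleLoading m k (removeL k b) := by
  exact ⟨fwd_dir m k hk b hL, back_dir m k b hL⟩
end

section
/- (Sufficient slack implies fragility-feasibility.) If the total number of items s in the sequence satisfies s ≤ mk - k, then the sequence admits a feasible loading into m stacks of height k, regardless of the types of the items. -/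
/-!
Heavy items fill the stacks `0, 1, 2, …` from the left and light items the stacks
`m - 1, m - 2, …` from the right, `k` at a time in sequence order: the `H` item preceded by `a`
other `H` items goes to stack `⌊a / k⌋`, the `L` item preceded by `c` other `L` items to stack
`m - 1 - ⌊c / k⌋`. If the two fronts never meet, every stack holds a single type and the loading
is feasible. The slack `s ≤ (m - 1) k` keeps them apart: `a + c + 2 ≤ s`, hence
`⌊a / k⌋ + ⌊c / k⌋ < m - 1`.
-/

open Finset

section Rank

variable {α : Type*} [LinearOrder α]

def rankIn (s : Finset α) (a : α) : ℕ := #{x ∈ s | x < a}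

lemma rankIn_lt_card {s : Finset α} {a : α} (ha : a ∈ s) : rankIn s a < #s :=
  card_lt_card (filter_ssubset.2 ⟨a, ha, lt_irrefl a⟩)

lemma rankIn_strictMonoOn (s : Finset α) : StrictMonoOn (rankIn s) s := by
  intro a ha b _ hab
  refine card_lt_card ⟨fun x hx => ?_, fun hsub => ?_⟩
  · rw [mem_filter] at hx ⊢
    exact ⟨hx.1, hx.2.trans hab⟩
  have : a ∈ ({x ∈ s | x < a} : Finset α) := hsub (mem_filter.2 ⟨ha, hab⟩)
  exact lt_irrefl a (mem_filter.1 this).2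

lemma card_filter_rankIn_div_eq_le {k : ℕ} (hk : 0 < k) (s : Finset α) (c : ℕ) :
    #{a ∈ s | rankIn s a / k = c} ≤ k := by
  set F : Finset α := {a ∈ s | rankIn s a / k = c}
  have hmaps : Set.MapsTo (rankIn s) F (Ico (c * k) (c * k + k)) := by
    intro a ha
    have hdiv := (Nat.div_eq_iff hk).1 (mem_filter.1 ha).2
    rw [coe_Ico, Set.mem_Ico]
    lia
  have hinj : Set.InjOn (rankIn s) F :=
    (rankIn_strictMonoOn s).injOn.mono (coe_subset.2 (filter_subset _ s))
  simpa using card_le_card_of_injOn _ hmaps hinj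

end Rank

section Loading

def positions (b : List Item) (t : Item) : Finset (Fin b.length) := {i | b.get i = t}

def stackIndex (m k : ℕ) (b : List Item) (i : Fin b.length) : ℕ :=
  match b.get i with
  | .H => rankIn (positions b .H) i / k
  | .L => m - 1 - rankIn (positions b .L) i / k

variable {m k : ℕ} {b : List Item}

lemma mem_positions {t : Item} {i : Fin b.length} : i ∈ positions b t ↔ b.get i = t := by
  simp [positions]

lemma card_positions_H_add_card_positions_L :
    #(positions b .H) + #(positions b .L) ≤ b.length := by
  have hdisj : Disjoint (positions b .H) (positions b .L) :=
    disjoint_left.2 fun i hH hL => by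
      rw [mem_positions] at hH hL
      exact Item.noConfusion (hH.symm.trans hL)
  simpa [← card_union_of_disjoint hdisj] using card_le_univ (positions b .H ∪ positions b .L)

variable (hb : b.length ≤ (m - 1) * k)
include hb

lemma rankIn_positions_div_lt {t : Item} {i : Fin b.length} (hi : b.get i = t) :
    rankIn (positions b t) i / k < m - 1 := by
  have hlt := rankIn_lt_card (mem_positions.2 hi)
  have hle := card_le_univ (positions b t)
  rw [Fintype.card_fin] at hle
  exact Nat.div_lt_of_lt_mul (by rw [mul_comm]; lia)

lemma stackIndex_lt (i : Fin b.length) : stackIndex m k b i < m := by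
  obtain ⟨t, hit⟩ : ∃ t, b.get i = t := ⟨_, rfl⟩
  have := rankIn_positions_div_lt hb hit
  cases t <;> simp only [stackIndex, hit] <;> lia

lemma stackIndex_ne {i j : Fin b.length} (hi : b.get i = .H) (hj : b.get j = .L) :
    stackIndex m k b i ≠ stackIndex m k b j := by
  have hrank : rankIn (positions b .H) i + rankIn (positions b .L) j < (m - 1) * k := by
    have := rankIn_lt_card (mem_positions.2 hi)
    have := rankIn_lt_card (mem_positions.2 hj)
    have := card_positions_H_add_card_positions_L (b := b)
    lia
  have hsum : rankIn (positions b .H) i / k + rankIn (positions b .L) j / k < m - 1 :=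
    Nat.div_add_div_le_add_div.trans_lt (Nat.div_lt_of_lt_mul (by rwa [mul_comm] at hrank))
  simp only [stackIndex, hi, hj]
  lia

lemma get_eq_of_stackIndex_eq {i j : Fin b.length}
    (h : stackIndex m k b i = stackIndex m k b j) : b.get i = b.get j := by
  cases hi : b.get i <;> cases hj : b.get j
  all_goals first | rfl | exfalso
  · exact stackIndex_ne hb hj hi h.symm
  · exact stackIndex_ne hb hi hj h

lemma rankIn_div_eq_of_stackIndex_eq {i j : Fin b.length}
    (h : stackIndex m k b i = stackIndex m k b j) :
    rankIn (positions b (b.get i)) j / k = rankIn (positions b (b.get i)) i / k := by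
  obtain ⟨t, hit⟩ : ∃ t, b.get i = t := ⟨_, rfl⟩
  have hjt := (get_eq_of_stackIndex_eq hb h).symm.trans hit
  have hi := rankIn_positions_div_lt hb hit
  have hj := rankIn_positions_div_lt hb hjt
  rw [hit]
  cases t <;> simp only [stackIndex, hit, hjt] at h <;> lia

lemma card_stackIndex_eq_le (c : ℕ) : #{i | stackIndex m k b i = c} ≤ k := by
  rcases eq_empty_or_nonempty ({i | stackIndex m k b i = c} : Finset (Fin b.length))
    with hempty | ⟨i₀, hi₀⟩
  · simp [hempty]
  have hk : 0 < k := Nat.pos_of_mul_pos_left (i₀.pos.trans_le hb)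
  set t := b.get i₀
  refine (card_le_card fun j hj => ?_).trans
    (card_filter_rankIn_div_eq_le hk (positions b t) (rankIn (positions b t) i₀ / k))
  have h : stackIndex m k b i₀ = stackIndex m k b j :=
    (mem_filter.1 hi₀).2.trans (mem_filter.1 hj).2.symm
  exact mem_filter.2 ⟨mem_positions.2 (get_eq_of_stackIndex_eq hb h).symm,
    rankIn_div_eq_of_stackIndex_eq hb h⟩

theorem feasibleLoading_of_length_le_sub_one_mul : FeasibleLoading m k b :=
  ⟨fun i => ⟨stackIndex m k b i, stackIndex_lt hb i⟩,
    fun s => by simpa only [Fin.ext_iff] using card_stackIndex_eq_le hb s,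
    fun _ _ _ hij hi => (get_eq_of_stackIndex_eq hb (Fin.ext_iff.1 hij)).symm.trans hi⟩

end Loading

theorem stmt13_general (m k : ℕ) (b : List Item)
    (hs : b.length ≤ m * k - k) :
    FeasibleLoading m k b :=
  feasibleLoading_of_length_le_sub_one_mul (by rwa [Nat.sub_one_mul])

theorem stmt13 (m k : ℕ) (hm : 0 < m) (hk : 0 < k) (b : List Item)
    (hs : b.length ≤ m * k - k) :
    FeasibleLoading m k b :=
  stmt13_general m k b hs
end

section
/- (Height-2 corollary.) Let k = 2. If some item of type H occurs strictly before some item of type L in the sequence, then the sequence (of at most 2m items) admits a feasible loading into m stacks of height 2. -/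
lemma item_ne_L {x : Item} (hx : x ≠ Item.L) : x = Item.H := by
  cases x <;> simp_all

lemma item_L_ne_H : Item.L ≠ Item.H := by simp

theorem stmt15 (m : ℕ) (b : List Item) (hs : b.length ≤ 2 * m)
    (i j : Fin b.length) (hij : i < j)
    (hH : b.get i = Item.H) (hL : b.get j = Item.L) :
    FeasibleLoading m 2 b := by
  classical
  set HS : Finset (Fin b.length) := Finset.univ.filter (fun p => b.get p = Item.H) with hHSdef
  set LS : Finset (Fin b.length) := Finset.univ.filter (fun p => ¬ b.get p = Item.H) with hLSdef
  have hmemH : ∀ p : Fin b.length, p ∈ HS ↔ b.get p = Item.H := by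
    intro p; simp [hHSdef]
  have hmemL : ∀ p : Fin b.length, p ∈ LS ↔ ¬ b.get p = Item.H := by
    intro p; simp [hLSdef]
  set h := HS.card with hh
  set l := LS.card with hl
  have hhl : h + l = b.length := by
    have := Finset.card_filter_add_card_filter_not
      (s := (Finset.univ : Finset (Fin b.length))) (p := fun p => b.get p = Item.H)
    simpa [hh, hl, hHSdef, hLSdef] using this
  set eH := HS.orderIsoOfFin rfl with heH
  set eL := LS.orderIsoOfFin rfl with heL
  set rH : Fin b.length → ℕ := fun p => if hp : p ∈ HS then (eH.symm ⟨p, hp⟩ : Fin h) else 0 with hrH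
  set rL : Fin b.length → ℕ := fun p => if hp : p ∈ LS then (eL.symm ⟨p, hp⟩ : Fin l) else 0 with hrL
  have rHlt : ∀ p ∈ HS, rH p < h := by
    intro p hp; simp only [hrH, dif_pos hp]; exact (eH.symm ⟨p, hp⟩).isLt
  have rLlt : ∀ p ∈ LS, rL p < l := by
    intro p hp; simp only [hrL, dif_pos hp]; exact (eL.symm ⟨p, hp⟩).isLt
  have rHinj : ∀ p ∈ HS, ∀ q ∈ HS, rH p = rH q → p = q := by
    intro p hp q hq e
    simp only [hrH, dif_pos hp, dif_pos hq] at e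
    have e2 : eH.symm ⟨p, hp⟩ = eH.symm ⟨q, hq⟩ := Fin.ext e
    have := eH.symm.injective e2
    exact Subtype.ext_iff.mp this
  have rLinj : ∀ p ∈ LS, ∀ q ∈ LS, rL p = rL q → p = q := by
    intro p hp q hq e
    simp only [hrL, dif_pos hp, dif_pos hq] at e
    have e2 : eL.symm ⟨p, hp⟩ = eL.symm ⟨q, hq⟩ := Fin.ext e
    have := eL.symm.injective e2
    exact Subtype.ext_iff.mp this
  have rHmin : ∀ p ∈ HS, rH p = 0 → ∀ q ∈ HS, p ≤ q := by
    intro p hp e q hq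
    simp only [hrH, dif_pos hp] at e
    have hle : eH.symm ⟨p, hp⟩ ≤ eH.symm ⟨q, hq⟩ := by
      rw [Fin.le_def, e]; exact Nat.zero_le _
    exact Subtype.mk_le_mk.mp (eH.symm.le_iff_le.mp hle)
  have rLmax : ∀ p ∈ LS, rL p = l - 1 → ∀ q ∈ LS, q ≤ p := by
    intro p hp e q hq
    simp only [hrL, dif_pos hp] at e
    have hle : eL.symm ⟨q, hq⟩ ≤ eL.symm ⟨p, hp⟩ := by
      rw [Fin.le_def, e]
      have := (eL.symm ⟨q, hq⟩).isLt
      omega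
    exact Subtype.mk_le_mk.mp (eL.symm.le_iff_le.mp hle)
  have hiH : i ∈ HS := (hmemH i).mpr hH
  have hjL : j ∈ LS := (hmemL j).mpr (by rw [hL]; exact item_L_ne_H)
  have h1 : 1 ≤ h := Finset.card_pos.mpr ⟨i, hiH⟩
  have l1 : 1 ≤ l := Finset.card_pos.mpr ⟨j, hjL⟩
  have hm : 1 ≤ m := by omega
  set g : Fin b.length → ℕ := fun p =>
    if p ∈ HS then (h - 1 - rH p) / 2
    else if h % 2 = 1 ∧ l % 2 = 1 ∧ rL p = l - 1 then (h - 1) / 2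
    else (h + 1) / 2 + rL p / 2 with hg
  have memLS_of_not : ∀ p : Fin b.length, p ∉ HS → p ∈ LS := by
    intro p hp
    exact (hmemL p).mpr (fun c => hp ((hmemH p).mpr c))
  have gbound : ∀ p, g p < m := by
    intro p
    by_cases hp : p ∈ HS
    · simp only [hg, if_pos hp]
      have := rHlt p hp
      omega
    · have hpL := memLS_of_not p hp
      have hrl := rLlt p hpL
      simp only [hg, if_neg hp]
      by_cases hsp : h % 2 = 1 ∧ l % 2 = 1 ∧ rL p = l - 1
      · rw [if_pos hsp]; omega
      · rw [if_neg hsp]; omega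
  refine ⟨fun p => ⟨g p, gbound p⟩, ?_, ?_⟩
  · intro s
    have hcard2 : ({0, 1} : Finset ℕ).card = 2 := by decide
    rw [← hcard2]
    apply Finset.card_le_card_of_injOn
      (fun p => if p ∈ HS then (h - 1 - rH p) % 2
                else if h % 2 = 1 ∧ l % 2 = 1 ∧ rL p = l - 1 then 1 else rL p % 2)
    · intro p _
      dsimp only
      by_cases hp : p ∈ HS
      · rw [if_pos hp]
        rcases Nat.mod_two_eq_zero_or_one (h - 1 - rH p) with e | e <;> simp [e]
      · rw [if_neg hp]
        by_cases hsp : h % 2 = 1 ∧ l % 2 = 1 ∧ rL p = l - 1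
        · rw [if_pos hsp]; simp
        · rw [if_neg hsp]
          rcases Nat.mod_two_eq_zero_or_one (rL p) with e | e <;> simp [e]
    · intro p hp q hq e
      dsimp only at e
      simp only [Finset.mem_coe, Finset.mem_filter] at hp hq
      have gp : g p = (s : ℕ) := congrArg Fin.val hp.2
      have gq : g q = (s : ℕ) := congrArg Fin.val hq.2
      have ge : g p = g q := by rw [gp, gq]
      clear hp hq gp gq
      by_cases hp1 : p ∈ HS <;> by_cases hq1 : q ∈ HS
      · -- both H
        rw [if_pos hp1, if_pos hq1] at e
        simp only [hg, if_pos hp1, if_pos hq1] at ge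
        have h1p := rHlt p hp1
        have h1q := rHlt q hq1
        exact rHinj p hp1 q hq1 (by omega)
      · -- p H, q L
        have hqL := memLS_of_not q hq1
        have hrq := rLlt q hqL
        have hrp := rHlt p hp1
        rw [if_pos hp1, if_neg hq1] at e
        simp only [hg, if_pos hp1, if_neg hq1] at ge
        by_cases hsp : h % 2 = 1 ∧ l % 2 = 1 ∧ rL q = l - 1
        · rw [if_pos hsp] at e
          rw [if_pos hsp] at ge
          omega
        · rw [if_neg hsp] at e
          rw [if_neg hsp] at ge
          omega
      · -- p L, q H
        have hpL := memLS_of_not p hp1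
        have hrp := rLlt p hpL
        have hrq := rHlt q hq1
        rw [if_neg hp1, if_pos hq1] at e
        simp only [hg, if_neg hp1, if_pos hq1] at ge
        by_cases hsp : h % 2 = 1 ∧ l % 2 = 1 ∧ rL p = l - 1
        · rw [if_pos hsp] at e
          rw [if_pos hsp] at ge
          omega
        · rw [if_neg hsp] at e
          rw [if_neg hsp] at ge
          omega
      · -- both L
        have hpL := memLS_of_not p hp1
        have hqL := memLS_of_not q hq1
        have hrp := rLlt p hpL
        have hrq := rLlt q hqL
        rw [if_neg hp1, if_neg hq1] at e
        simp only [hg, if_neg hp1, if_neg hq1] at ge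
        by_cases hsp : h % 2 = 1 ∧ l % 2 = 1 ∧ rL p = l - 1 <;>
          by_cases hsq : h % 2 = 1 ∧ l % 2 = 1 ∧ rL q = l - 1
        · exact rLinj p hpL q hqL (by omega)
        · rw [if_pos hsp] at e ge
          rw [if_neg hsq] at e ge
          omega
        · rw [if_neg hsp] at e ge
          rw [if_pos hsq] at e ge
          omega
        · rw [if_neg hsp] at e ge
          rw [if_neg hsq] at e ge
          exact rLinj p hpL q hqL (by omega)
  · intro p q hpq hf hpL'
    by_contra hqL
    have hqH : b.get q = Item.H := item_ne_L hqL
    have hq1 : q ∈ HS := (hmemH q).mpr hqH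
    have hp1 : p ∉ HS := by
      intro c
      exact item_L_ne_H ((hpL' ▸ (hmemH p).mp c : Item.L = Item.H))
    have hpL : p ∈ LS := memLS_of_not p hp1
    have ge : g p = g q := congrArg Fin.val hf
    simp only [hg, if_neg hp1, if_pos hq1] at ge
    have hrq := rHlt q hq1
    by_cases hsp : h % 2 = 1 ∧ l % 2 = 1 ∧ rL p = l - 1
    · rw [if_pos hsp] at ge
      -- forces rH q = 0, so q is the minimal H; p is maximal L
      have hq0 : rH q = 0 := by omega
      have hqi : q ≤ i := rHmin q hq1 hq0 i hiH
      have hjp : j ≤ p := rLmax p hpL hsp.2.2 j hjL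
      exact absurd hpq (not_lt.mpr ((hqi.trans hij.le).trans hjp))
    · rw [if_neg hsp] at ge
      omega
end

section
/- (Validity of the H-item budget.) Suppose a sequence S = (b_1, …, b_s) admits a feasible loading into m stacks of height k, and let i be an index with b_i of type L such that a^H(i) + F(a^L(i)) < k. Then the number of H items occurring after position i satisfies a^H(s) - a^H(i) ≤ mk - (l(i) - l(i) mod k + k). -/
lemma card_filter_get (l : List Item) (a : Item) :
    (Finset.univ.filter fun j : Fin l.length => l.get j = a).card = l.count a := by
  induction l with
  | nil => simp
  | cons x t ih =>
    rw [Finset.card_filter] at *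
    simp only [List.length_cons]
    rw [Fin.sum_univ_succ, List.count_cons, ← ih]
    simp only [List.get_eq_getElem, List.getElem_cons_zero, List.getElem_cons_succ, Fin.val_succ,
      add_comm]
    congr 1
    cases x <;> cases a <;> rfl

lemma card_filter_get_take (l : List Item) (n : ℕ) (a : Item) :
    (Finset.univ.filter fun j : Fin l.length => (j : ℕ) < n ∧ l.get j = a).card
      = (l.take n).count a := by
  have haux : (l.take n).length ≤ l.length := by simp [List.length_take]
  rw [← card_filter_get (l.take n) a]
  symm
  apply Finset.card_bij (fun j _ => Fin.castLE haux j)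
  · intro j hj
    simp only [Finset.mem_filter, Finset.mem_univ, true_and] at hj ⊢
    have hjn : (j : ℕ) < n := by
      have := j.isLt; simp [List.length_take] at this; omega
    refine ⟨hjn, ?_⟩
    rw [← hj]
    simp [List.get_eq_getElem, Fin.castLE]
  · intro j1 _ j2 _ h
    exact Fin.ext (by simpa [Fin.castLE] using congrArg Fin.val h)
  · intro j hj
    simp only [Finset.mem_filter, Finset.mem_univ, true_and] at hj
    refine ⟨⟨(j : ℕ), by simp [List.length_take]; omega⟩, by
      simp only [Finset.mem_filter, Finset.mem_univ, true_and]
      simpa [List.get_eq_getElem] using hj.2, rfl⟩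

lemma count_L_add_count_H (l : List Item) :
    l.count Item.L + l.count Item.H = l.length := by
  induction l with
  | nil => simp
  | cons x t ih =>
    have eLH : (Item.L == Item.H) = false := rfl
    have eHL : (Item.H == Item.L) = false := rfl
    have eLL : (Item.L == Item.L) = true := rfl
    have eHH : (Item.H == Item.H) = true := rfl
    cases x <;> simp [List.count_cons, ← ih, eLH, eHL, eLL, eHH] <;> omega

theorem stmt16 (m k : ℕ) (b : List Item)
    (hfeas : FeasibleLoading m k b)
    (i : Fin b.length) (hbi : b.get i = Item.L)
    (h1 : (b.take ((i : ℕ) + 1)).count Item.H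
        + Fmod k ((b.take ((i : ℕ) + 1)).count Item.L) < k) :
    (b.count Item.H : ℤ) - ((b.take ((i : ℕ) + 1)).count Item.H : ℤ) ≤
      (m * k : ℤ) - (((i : ℤ) + 1) - ((((i : ℕ) + 1) % k : ℕ) : ℤ) + (k : ℤ)) := by
  classical
  obtain ⟨f, hcap, hord⟩ := hfeas
  set n := (i : ℕ) + 1 with hn
  have hnlen : n ≤ b.length := i.isLt
  set aH := (b.take n).count Item.H with haH
  set aL := (b.take n).count Item.L with haL
  -- facts from h1
  have hmod1 : aL % k ≠ 0 := by unfold Fmod at h1; split at h1 <;> omega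
  have hmod2 : aH + aL % k < k := by unfold Fmod at h1; split at h1 <;> omega
  have hkpos : 0 < k := by omega
  have hsum : aH + aL = n := by
    have h2 := count_L_add_count_H (b.take n)
    have h3 : (b.take n).length = n := by simp [List.length_take]; omega
    omega
  have hnmod : n % k = aH + aL % k := by
    have haHk : aH < k := by omega
    calc n % k = (aH + aL) % k := by rw [hsum]
      _ = (aH % k + aL % k) % k := Nat.add_mod _ _ _
      _ = (aH + aL % k) % k := by rw [Nat.mod_eq_of_lt haHk]
      _ = aH + aL % k := Nat.mod_eq_of_lt hmod2
  -- the stacks containing a prefix L item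
  set T : Finset (Fin m) := Finset.univ.filter
      (fun s => ∃ j : Fin b.length, f j = s ∧ (j : ℕ) < n ∧ b.get j = Item.L) with hT
  set BH : Finset (Fin b.length) := Finset.univ.filter
      (fun j : Fin b.length => n ≤ (j : ℕ) ∧ b.get j = Item.H) with hBH
  have hTm : T.card ≤ m := by
    have := Finset.card_le_univ T
    simpa using this
  -- count of b splits
  have hBHcount : b.count Item.H = aH + BH.card := by
    have hsplit := Finset.card_filter_add_card_filter_not
      (s := Finset.univ.filter (fun j : Fin b.length => b.get j = Item.H))
      (p := fun j => (j : ℕ) < n)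
    simp only [Finset.filter_filter] at hsplit
    have e1 : (Finset.univ.filter (fun j : Fin b.length => b.get j = Item.H ∧ (j : ℕ) < n))
        = (Finset.univ.filter fun j : Fin b.length => (j : ℕ) < n ∧ b.get j = Item.H) := by
      ext j; simp [and_comm]
    have e2 : (Finset.univ.filter (fun j : Fin b.length => b.get j = Item.H ∧ ¬ (j : ℕ) < n))
        = BH := by
      ext j; simp [hBH, and_comm, not_lt]
    rw [e1, e2, card_filter_get_take b n Item.H, ← haH] at hsplit
    rw [← card_filter_get b Item.H, ← hsplit]
  -- aL ≤ |T| * k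
  have hALle : aL ≤ T.card * k := by
    rw [haL, ← card_filter_get_take b n Item.L]
    calc (Finset.univ.filter fun j : Fin b.length => (j : ℕ) < n ∧ b.get j = Item.L).card
        ≤ (T.biUnion fun s => Finset.univ.filter (fun j => f j = s)).card := by
          apply Finset.card_le_card
          intro j hj
          simp only [Finset.mem_filter, Finset.mem_univ, true_and] at hj
          refine Finset.mem_biUnion.2 ⟨f j, ?_, ?_⟩
          · simp only [hT, Finset.mem_filter, Finset.mem_univ, true_and]
            exact ⟨j, rfl, hj.1, hj.2⟩
          · simp
      _ ≤ ∑ s ∈ T, (Finset.univ.filter (fun j => f j = s)).card := Finset.card_biUnion_le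
      _ ≤ ∑ _s ∈ T, k := Finset.sum_le_sum (fun s _ => hcap s)
      _ = T.card * k := by rw [Finset.sum_const, smul_eq_mul]
  have hTpos : aL / k + 1 ≤ T.card := by
    have hlt : aL < T.card * k :=
      lt_of_le_of_ne hALle (fun h => hmod1 (by rw [h, Nat.mul_mod_left]))
    exact (Nat.div_lt_iff_lt_mul hkpos).2 hlt
  have hdiv : aL / k * k + aL % k = aL := Nat.div_add_mod' aL k
  have F2 : aL + k ≤ T.card * k + aL % k := by
    have h2 : (aL / k + 1) * k ≤ T.card * k := Nat.mul_le_mul_right k hTpos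
    have h3 : (aL / k + 1) * k = aL / k * k + k := by ring
    linarith
  -- BH items go to stacks outside T
  have hBHle : BH.card ≤ Tᶜ.card * k := by
    calc BH.card ≤ (Tᶜ.biUnion fun s => Finset.univ.filter (fun j => f j = s)).card := by
          apply Finset.card_le_card
          intro j hj
          simp only [hBH, Finset.mem_filter, Finset.mem_univ, true_and] at hj
          refine Finset.mem_biUnion.2 ⟨f j, ?_, by simp⟩
          rw [Finset.mem_compl]
          intro hfT
          simp only [hT, Finset.mem_filter, Finset.mem_univ, true_and] at hfT
          obtain ⟨j', hfj', hj'n, hj'L⟩ := hfT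
          have hjj : j' < j := by
            rw [Fin.lt_def]; omega
          have := hord j' j hjj hfj' hj'L
          rw [this] at hj
          exact absurd hj.2 (by simp)
      _ ≤ ∑ s ∈ Tᶜ, (Finset.univ.filter (fun j => f j = s)).card := Finset.card_biUnion_le
      _ ≤ ∑ _s ∈ Tᶜ, k := Finset.sum_le_sum (fun s _ => hcap s)
      _ = Tᶜ.card * k := by rw [Finset.sum_const, smul_eq_mul]
  have hcompl : Tᶜ.card = m - T.card := by
    rw [Finset.card_compl, Fintype.card_fin]
  have F1 : BH.card + T.card * k ≤ m * k := by
    have e1 : (m - T.card) * k + T.card * k = m * k := by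
      rw [← add_mul, Nat.sub_add_cancel hTm]
    calc BH.card + T.card * k ≤ (m - T.card) * k + T.card * k := by
          rw [hcompl] at hBHle; exact add_le_add_left hBHle _
      _ = m * k := e1
  -- final arithmetic over ℤ
  have hiz : ((i : ℤ) + 1) = (n : ℤ) := by rw [hn]; push_cast; ring
  rw [hBHcount, hiz]
  have z1 : ((BH.card : ℤ) + (T.card : ℤ) * (k : ℤ) ≤ (m : ℤ) * (k : ℤ)) := by exact_mod_cast F1
  have z2 : ((aL : ℤ) + (k : ℤ) ≤ (T.card : ℤ) * (k : ℤ) + ((aL % k : ℕ) : ℤ)) := by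
    exact_mod_cast F2
  have z3 : ((aH : ℤ) + (aL : ℤ) = (n : ℤ)) := by exact_mod_cast hsum
  have z4 : (((n % k : ℕ) : ℤ) = (aH : ℤ) + ((aL % k : ℕ) : ℤ)) := by exact_mod_cast hnmod
  push_cast
  linarith
end
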